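/- arXiv:math/0505159 — 9 statements merged into one kernel-verified Lean document; each statement's English description precedes it below -/
import Mathlib

section
/- Let α_1, ..., α_m ∈ ℤ^n. The injective homomorphism ℤ^n → ℤ^{n+1}, α ↦ (α, 0), induces an injective homomorphism ℤ^n/ℤ⟨α_2-α_1, ..., α_m-α_1⟩ → ℤ^{n+1}/ℤ⟨(α_1,1), ..., (α_m,1)⟩ which restricts to an isomorphism between the respective torsion submodules. -/
/-!
The map `(x, t) ↦ x - t • α₀` from `ℤⁿ × ℤ` onto `ℤⁿ` kills `(α₀, 1)` and sends each `(αⱼ, 1)` to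
`αⱼ - α₀`, so `ℤ⟨(αⱼ, 1)⟩` is the preimage of `ℤ⟨αⱼ - α₀⟩`. Hence it induces an isomorphism
`ℤⁿ⁺¹/ℤ⟨(αⱼ, 1)⟩ ≃ ℤⁿ/ℤ⟨αⱼ - α₀⟩` whose inverse is induced by `x ↦ (x, 0)`; being an isomorphism,
it matches the torsion submodules.
-/

open Submodule

section
variable {R M : Type*} [CommRing R] [AddCommGroup M] [Module R M]

def dehomogenize (a : M) : M × R →ₗ[R] M :=
  LinearMap.fst R M R - (LinearMap.snd R M R).smulRight a

@[simp]
theorem dehomogenize_apply (a : M) (p : M × R) : dehomogenize a p = p.1 - p.2 • a := rfl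

theorem dehomogenize_surjective (a : M) : Function.Surjective (dehomogenize (R := R) a) :=
  fun x => ⟨(x, 0), by simp⟩

theorem span_homogenize_eq_comap {m : ℕ} (α : Fin (m + 1) → M) :
    span R (Set.range fun j => (α j, (1 : R))) =
      (span R (Set.range fun j : Fin m => α j.succ - α 0)).comap (dehomogenize (α 0)) := by
  set N := span R (Set.range fun j : Fin m => α j.succ - α 0)
  set P := span R (Set.range fun j => (α j, (1 : R)))
  have hgen (j : Fin (m + 1)) : (α j, (1 : R)) ∈ P := subset_span ⟨j, rfl⟩
  refine le_antisymm (span_le.mpr ?_) fun p hp => ?_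
  · rintro _ ⟨j, rfl⟩
    rcases Fin.eq_zero_or_eq_succ j with rfl | ⟨k, rfl⟩
    · simp
    · exact subset_span ⟨k, by simp⟩
  · have hinl : N.map (LinearMap.inl R M R) ≤ P := by
      rw [map_span_le]
      rintro _ ⟨j, rfl⟩
      simpa using sub_mem (hgen j.succ) (hgen 0)
    have hp_eq : p = LinearMap.inl R M R (dehomogenize (α 0) p) + p.2 • (α 0, (1 : R)) := by
      ext <;> simp
    rw [hp_eq]
    exact add_mem (hinl (mem_map_of_mem hp)) (smul_mem _ _ (hgen 0))

noncomputable def quotientComapDehomogenizeEquiv (N : Submodule R M) (a : M) :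
    ((M × R) ⧸ N.comap (dehomogenize a)) ≃ₗ[R] M ⧸ N :=
  (quotEquivOfEq _ _ (by rw [LinearMap.ker_comp, ker_mkQ])).trans
    ((N.mkQ ∘ₗ dehomogenize a).quotKerEquivOfSurjective
      (N.mkQ_surjective.comp (dehomogenize_surjective a)))

@[simp]
theorem quotientComapDehomogenizeEquiv_symm_mk (N : Submodule R M) (a : M) (x : M) :
    (quotientComapDehomogenizeEquiv N a).symm (Submodule.Quotient.mk x) = Submodule.Quotient.mk (x, 0) := by
  rw [LinearEquiv.symm_apply_eq]
  simp [quotientComapDehomogenizeEquiv]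

end

theorem LinearEquiv.map_torsion {R M M' : Type*} [CommSemiring R] [AddCommMonoid M] [Module R M]
    [AddCommMonoid M'] [Module R M'] (e : M ≃ₗ[R] M') :
    (torsion R M).map e.toLinearMap = torsion R M' := by
  ext y
  simp only [mem_map_equiv, mem_torsion_iff]
  exact exists_congr fun c => by
    rw [Submonoid.smul_def, Submonoid.smul_def, ← map_smul, e.symm.map_eq_zero_iff]

/-- The map `ℤ^n → ℤ^{n+1} = ℤ^n × ℤ`, `α ↦ (α, 0)`, induces an injective homomorphism
`ℤ^n/ℤ⟨α_2-α_1,…,α_m-α_1⟩ → ℤ^{n+1}/ℤ⟨(α_1,1),…,(α_m,1)⟩` which restricts to an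
isomorphism of the torsion submodules (here there are `m + 1` vectors `α_0,…,α_m`). -/
theorem stmt_1 (n m : ℕ) (α : Fin (m + 1) → (Fin n → ℤ))
    (N₁ : Submodule ℤ (Fin n → ℤ))
    (hN₁ : N₁ = Submodule.span ℤ (Set.range fun j : Fin m => α j.succ - α 0))
    (N₂ : Submodule ℤ ((Fin n → ℤ) × ℤ))
    (hN₂ : N₂ = Submodule.span ℤ (Set.range fun j : Fin (m + 1) => (α j, (1 : ℤ)))) :
    ∃ g : ((Fin n → ℤ) ⧸ N₁) →ₗ[ℤ] (((Fin n → ℤ) × ℤ) ⧸ N₂),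
      Function.Injective g ∧
      (∀ x : Fin n → ℤ,
        g (Submodule.Quotient.mk x) = Submodule.Quotient.mk (x, (0 : ℤ))) ∧
      Submodule.map g (Submodule.torsion ℤ ((Fin n → ℤ) ⧸ N₁)) =
        Submodule.torsion ℤ (((Fin n → ℤ) × ℤ) ⧸ N₂) := by
  rw [span_homogenize_eq_comap, ← hN₁] at hN₂
  subst hN₂
  let e := (quotientComapDehomogenizeEquiv N₁ (α 0)).symm
  exact ⟨e.toLinearMap, e.injective, quotientComapDehomogenizeEquiv_symm_mk N₁ (α 0), e.map_torsion⟩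
end

section
/- Let F and G be finite sets of monomials in k[x_1,...,x_n] with F ⊆ G, and let A and B be the log-matrices of F and G respectively (the integer matrices whose columns are the exponent vectors of the monomials). Then the ring extension k[F] ⊆ k[G] is birational (i.e., the fraction fields of k[F] and k[G] coincide) if and only if ℤA = ℤB, where ℤC denotes the subgroup of ℤ^n generated by the columns of C. -/
/-!
A monomial `x^g` lies in the fraction field of `k[F]` exactly when `g ∈ ℤF`. If `x^g = a / b`
with `a, b ∈ k[F]`, then `a = x^g b`; since supports of elements of `k[F]` lie in the monoid
`ℕF`, any `β` in the support of `b` gives `β, g + β ∈ ℕF`, so `g = (g + β) - β ∈ ℤF`. Conversely,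
the integer vectors `z` whose Laurent monomial `x^z` lies in a given subfield form a subgroup
of `ℤ^n`, which contains `F` when the subfield contains `k[F]`. As `k[G]` is generated by the
monomials `x^g`, `g ∈ G`, both sides of the equivalence say that every `g ∈ G` lies in `ℤF`.
-/

open MvPolynomial

/-- The subfield of the fraction field of `k[x_1,…,x_n]` generated by the subalgebra
`k[S]` generated by a set `S` of polynomials; its elements are exactly the fractions
of elements of `k[S]`, i.e. this is the fraction field of `k[S]`. -/
noncomputable def fractionFieldOf (n : ℕ) (k : Type*) [Field k]
    (S : Set (MvPolynomial (Fin n) k)) :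
    Subfield (FractionRing (MvPolynomial (Fin n) k)) :=
  Subfield.closure
    ((algebraMap (MvPolynomial (Fin n) k) (FractionRing (MvPolynomial (Fin n) k))) ''
      (Algebra.adjoin k S : Set (MvPolynomial (Fin n) k)))

namespace MvPolynomial

variable {σ R : Type*} [CommSemiring R]

theorem support_subset_closure_of_mem_adjoin_monomial {S : Set (σ →₀ ℕ)}
    {p : MvPolynomial σ R} (hp : p ∈ Algebra.adjoin R ((fun v => monomial v (1 : R)) '' S)) :
    (p.support : Set (σ →₀ ℕ)) ⊆ AddSubmonoid.closure S := by
  classical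
  induction hp using Algebra.adjoin_induction with
  | mem _ h =>
    obtain ⟨v, hv, rfl⟩ := h
    exact (Finset.coe_subset.2 support_monomial_subset).trans
      (by simpa using AddSubmonoid.subset_closure hv)
  | algebraMap c =>
    exact (Finset.coe_subset.2 (support_monomial_subset (s := 0))).trans (by simp)
  | add p q _ _ hp hq =>
    exact (Finset.coe_subset.2 support_add).trans (by simpa using Set.union_subset hp hq)
  | mul p q _ _ hp hq =>
    exact (Finset.coe_subset.2 (support_mul p q)).trans
      (by simpa using AddSubmonoid.add_subset hp hq)

theorem exists_add_mem_closure_of_monomial_mul_mem_adjoin {S : Set (σ →₀ ℕ)} {g : σ →₀ ℕ}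
    {b : MvPolynomial σ R}
    (hgb : monomial g 1 * b ∈ Algebra.adjoin R ((fun v => monomial v (1 : R)) '' S))
    (hb : b ∈ Algebra.adjoin R ((fun v => monomial v (1 : R)) '' S)) (hb0 : b ≠ 0) :
    ∃ β ∈ AddSubmonoid.closure S, g + β ∈ AddSubmonoid.closure S := by
  obtain ⟨β, hβ⟩ := support_nonempty.2 hb0
  refine ⟨β, support_subset_closure_of_mem_adjoin_monomial hb hβ,
    support_subset_closure_of_mem_adjoin_monomial hgb ?_⟩
  rw [Finset.mem_coe, mem_support_iff, coeff_monomial_mul, one_mul]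
  exact mem_support_iff.1 hβ

theorem algebraMap_monomial_eq_prod_zpow [Fintype σ] {K : Type*} [Field K]
    [Algebra (MvPolynomial σ R) K] (g : σ →₀ ℕ) :
    algebraMap (MvPolynomial σ R) K (monomial g 1) =
      ∏ i, algebraMap (MvPolynomial σ R) K (X i) ^ (g i : ℤ) := by
  simp [monomial_eq, Finsupp.prod_pow]

end MvPolynomial

theorem intCast_mem_span_of_mem_closure {σ : Type*} {S : Set (σ →₀ ℕ)} {α : σ →₀ ℕ}
    (hα : α ∈ AddSubmonoid.closure S) :
    (fun i => (α i : ℤ)) ∈ Submodule.span ℤ ((fun v : σ →₀ ℕ => fun i => (v i : ℤ)) '' S) := by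
  induction hα using AddSubmonoid.closure_induction with
  | mem v hv => exact Submodule.subset_span ⟨v, hv, rfl⟩
  | zero => exact zero_mem _
  | add v w _ _ hv hw => exact add_mem hv hw

def Subfield.zpowExponents {σ K : Type*} [Fintype σ] [Field K] (E : Subfield K) (x : σ → K)
    (hx : ∀ i, x i ≠ 0) : AddSubgroup (σ → ℤ) where
  carrier := {z | ∏ i, x i ^ z i ∈ E}
  zero_mem' := by simp [one_mem]
  add_mem' {a b} ha hb := by
    show ∏ i, x i ^ (a + b) i ∈ E
    simpa only [Pi.add_apply, zpow_add₀ (hx _), Finset.prod_mul_distrib]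
      using mul_mem ha hb
  neg_mem' {a} ha := by
    show ∏ i, x i ^ (-a) i ∈ E
    simpa only [Pi.neg_apply, zpow_neg, Finset.prod_inv_distrib]
      using inv_mem ha

section FractionFieldOf

variable {n : ℕ} {k : Type*} [Field k]

local notation "φ" => algebraMap (MvPolynomial (Fin n) k) (FractionRing (MvPolynomial (Fin n) k))

theorem algebraMap_mem_fractionFieldOf {S : Set (MvPolynomial (Fin n) k)}
    {p : MvPolynomial (Fin n) k} (hp : p ∈ Algebra.adjoin k S) :
    φ p ∈ fractionFieldOf n k S :=
  Subfield.subset_closure ⟨p, hp, rfl⟩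

theorem mem_fractionFieldOf_iff {S : Set (MvPolynomial (Fin n) k)}
    {x : FractionRing (MvPolynomial (Fin n) k)} :
    x ∈ fractionFieldOf n k S ↔
      ∃ a ∈ Algebra.adjoin k S, ∃ b ∈ Algebra.adjoin k S, φ a / φ b = x := by
  rw [fractionFieldOf, Subfield.mem_closure_iff, ← RingHom.map_closure,
    ← Subalgebra.coe_toSubring, Subring.closure_eq]
  simp only [Subring.mem_map, Subalgebra.mem_toSubring]
  grind

theorem fractionFieldOf_le_fractionFieldOf_iff {S T : Set (MvPolynomial (Fin n) k)} :
    fractionFieldOf n k S ≤ fractionFieldOf n k T ↔ ∀ s ∈ S, φ s ∈ fractionFieldOf n k T := by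
  refine ⟨fun h s hs => h (algebraMap_mem_fractionFieldOf (Algebra.subset_adjoin hs)), fun h => ?_⟩
  refine Subfield.closure_le.2 ?_
  rintro _ ⟨p, hp, rfl⟩
  rw [SetLike.mem_coe]
  induction hp using Algebra.adjoin_induction with
  | mem s hs => exact h s hs
  | algebraMap c => exact algebraMap_mem_fractionFieldOf (Subalgebra.algebraMap_mem _ c)
  | add p q _ _ hp hq => simpa only [map_add] using add_mem hp hq
  | mul p q _ _ hp hq => simpa only [map_mul] using mul_mem hp hq

theorem fractionFieldOf_mono {S T : Set (MvPolynomial (Fin n) k)} (h : S ⊆ T) :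
    fractionFieldOf n k S ≤ fractionFieldOf n k T :=
  fractionFieldOf_le_fractionFieldOf_iff.2 fun _ hs =>
    algebraMap_mem_fractionFieldOf (Algebra.subset_adjoin (h hs))

theorem algebraMap_monomial_mem_fractionFieldOf_iff (S : Set (Fin n →₀ ℕ)) (g : Fin n →₀ ℕ) :
    φ (monomial g 1) ∈ fractionFieldOf n k ((fun v => monomial v (1 : k)) '' S) ↔
      (fun i => (g i : ℤ)) ∈ Submodule.span ℤ ((fun v : Fin n →₀ ℕ => fun i => (v i : ℤ)) '' S) := by
  have hinj : Function.Injective φ := IsFractionRing.injective _ _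
  constructor
  · rw [mem_fractionFieldOf_iff]
    rintro ⟨a, ha, b, hb, hab⟩
    have hmonomial : φ (monomial g 1) ≠ 0 := (map_ne_zero_iff _ hinj).2 (by simp)
    have hb0 : φ b ≠ 0 := by
      rintro h
      rw [h, div_zero] at hab
      exact hmonomial hab.symm
    have hab' : monomial g 1 * b = a := hinj (by rw [map_mul, ← hab, div_mul_cancel₀ _ hb0])
    obtain ⟨β, hβ, hgβ⟩ := exists_add_mem_closure_of_monomial_mul_mem_adjoin (hab' ▸ ha) hb
      (by rintro rfl; simp at hb0)
    convert sub_mem (intCast_mem_span_of_mem_closure hgβ) (intCast_mem_span_of_mem_closure hβ)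
      using 1
    ext
    simp
  · intro hg
    set E := fractionFieldOf n k ((fun v => monomial v (1 : k)) '' S)
    have hX : ∀ i, φ (X i) ≠ 0 := fun i => (map_ne_zero_iff _ hinj).2 (X_ne_zero i)
    have hspan : Submodule.span ℤ ((fun v : Fin n →₀ ℕ => fun i => (v i : ℤ)) '' S) ≤
        (E.zpowExponents _ hX).toIntSubmodule := by
      rw [Submodule.span_le]
      rintro _ ⟨s, hs, rfl⟩
      show _ ∈ E
      rw [← algebraMap_monomial_eq_prod_zpow]
      exact algebraMap_mem_fractionFieldOf (Algebra.subset_adjoin ⟨s, hs, rfl⟩)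
    rw [algebraMap_monomial_eq_prod_zpow]
    exact hspan hg

end FractionFieldOf

/-- (APB) For finite sets of monomials `F ⊆ G` (given by their exponent vectors),
the extension `k[F] ⊆ k[G]` is birational (the fraction fields coincide) if and only
if the columns of the respective log-matrices generate the same subgroup of `ℤ^n`. -/
theorem stmt_2 (n : ℕ) (k : Type*) [Field k]
    (F G : Finset (Fin n →₀ ℕ)) (hFG : F ⊆ G) :
    (fractionFieldOf n k ((fun v => monomial v (1 : k)) '' (F : Set (Fin n →₀ ℕ))) =
      fractionFieldOf n k ((fun v => monomial v (1 : k)) '' (G : Set (Fin n →₀ ℕ))))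
    ↔ Submodule.span ℤ ((fun v : Fin n →₀ ℕ => fun i => (v i : ℤ)) '' (F : Set (Fin n →₀ ℕ))) =
      Submodule.span ℤ ((fun v : Fin n →₀ ℕ => fun i => (v i : ℤ)) '' (G : Set (Fin n →₀ ℕ))) := by
  have hFG' : (F : Set (Fin n →₀ ℕ)) ⊆ G := Finset.coe_subset.2 hFG
  rw [le_antisymm_iff, and_iff_right (fractionFieldOf_mono (Set.image_mono hFG')),
    le_antisymm_iff, and_iff_right (Submodule.span_mono (Set.image_mono hFG')),
    fractionFieldOf_le_fractionFieldOf_iff, Submodule.span_le, Set.forall_mem_image,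
    Set.image_subset_iff]
  exact forall₂_congr fun g _ => algebraMap_monomial_mem_fractionFieldOf_iff _ g
end

section
/- Let F = {x^{v_1},...,x^{v_q}} be monomials of degree d ≥ 2 with log-matrix A (columns v_i), let S be the numerical linear syzygy matrix (columns e'_j - e'_ℓ ∈ ℤ^q whenever x_i x^{v_j} = x_k x^{v_ℓ} for some i,k), and let M = AS. If rank(S) = q - 1 and rank(A) = n, then rank(M) = n - 1. -/
theorem sylv_aux (n q r : ℕ) (A : Matrix (Fin n) (Fin q) ℚ) (S : Matrix (Fin q) (Fin r) ℚ) :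
    A.rank + S.rank ≤ (A * S).rank + q := by
  set f := A.mulVecLin
  set g := S.mulVecLin
  set f' := f ∘ₗ (LinearMap.range g).subtype with hf'
  have hrange : LinearMap.range f' = LinearMap.range (A * S).mulVecLin := by
    rw [Matrix.mulVecLin_mul, hf', LinearMap.range_comp, LinearMap.range_comp,
      Submodule.range_subtype]
  have h1 := LinearMap.finrank_range_add_finrank_ker f'
  have h2 := LinearMap.finrank_range_add_finrank_ker f
  have hker : Module.finrank ℚ (LinearMap.ker f') ≤ Module.finrank ℚ (LinearMap.ker f) := by
    have hmem : ∀ x : LinearMap.ker f',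
        ((LinearMap.range g).subtype ∘ₗ (LinearMap.ker f').subtype) x ∈ LinearMap.ker f := by
      intro x
      have hx := x.2
      simp only [LinearMap.mem_ker, hf', LinearMap.comp_apply] at hx ⊢
      exact hx
    refine LinearMap.finrank_le_finrank_of_injective
      (f := LinearMap.codRestrict (LinearMap.ker f)
        ((LinearMap.range g).subtype ∘ₗ (LinearMap.ker f').subtype) hmem) ?_
    intro a b hab
    have h' : ((a : LinearMap.range g) : Fin q → ℚ) = ((b : LinearMap.range g) : Fin q → ℚ) := by
      have := congrArg Subtype.val hab
      simpa using this
    exact Subtype.ext (Subtype.ext h')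
  have hq : Module.finrank ℚ (Fin q → ℚ) = q := by simp
  have hSr : S.rank = Module.finrank ℚ (LinearMap.range g) := rfl
  have hAr : A.rank = Module.finrank ℚ (LinearMap.range f) := rfl
  have hASr : (A * S).rank = Module.finrank ℚ (LinearMap.range f') := by
    rw [Matrix.rank, hrange]
  omega


/-- Let `A` be the log-matrix of monomials `x^{v_1},…,x^{v_q}` of degree `d ≥ 2`, and
let `S` be a numerical linear syzygy matrix: each column of `S` is `e'_j - e'_ℓ` for
some linear syzygy `x_i x^{v_j} = x_k x^{v_ℓ}`.  If `rank S = q - 1` and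
`rank A = n`, then `rank (A S) = n - 1`. -/
theorem stmt_5 (n q r d : ℕ) (hd : 2 ≤ d)
    (v : Fin q → (Fin n →₀ ℕ)) (hdeg : ∀ j, ∑ i, v j i = d)
    (A : Matrix (Fin n) (Fin q) ℚ) (hA : ∀ i j, A i j = ((v j) i : ℚ))
    (S : Matrix (Fin q) (Fin r) ℚ)
    (hS : ∀ c : Fin r, ∃ (j l : Fin q) (i k : Fin n),
        (∀ t, S t c = (Pi.single j 1 : Fin q → ℚ) t - (Pi.single l 1 : Fin q → ℚ) t) ∧
        v j + Finsupp.single i 1 = v l + Finsupp.single k 1)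
    (hrS : S.rank = q - 1) (hrA : A.rank = n) :
    (A * S).rank = n - 1 := by
  have hsylv := sylv_aux n q r A S
  have hnq : n ≤ q := by
    have := Matrix.rank_le_card_width A
    simpa [hrA] using this
  -- column sums of A are d
  have hcolA : ∀ t : Fin q, ∑ i, A i t = (d : ℚ) := by
    intro t
    have : ∑ i, A i t = ((∑ i, v t i : ℕ) : ℚ) := by
      push_cast
      exact Finset.sum_congr rfl fun i _ => hA i t
    rw [this, hdeg t]
  -- column sums of S are 0
  have hcolS : ∀ c : Fin r, ∑ t, S t c = 0 := by
    intro c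
    obtain ⟨j, l, i, k, hcol, -⟩ := hS c
    have : ∑ t, S t c = ∑ t, ((Pi.single j 1 : Fin q → ℚ) t - (Pi.single l 1 : Fin q → ℚ) t) :=
      Finset.sum_congr rfl fun t _ => hcol t
    rw [this, Finset.sum_sub_distrib]
    simp [Finset.sum_pi_single]
  -- column sums of A*S are 0
  have hcolAS : ∀ c : Fin r, ∑ i, (A * S) i c = 0 := by
    intro c
    simp only [Matrix.mul_apply]
    rw [Finset.sum_comm]
    have : ∀ t : Fin q, ∑ i, A i t * S t c = (d : ℚ) * S t c := by
      intro t
      rw [← Finset.sum_mul, hcolA t]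
    rw [Finset.sum_congr rfl fun t _ => this t, ← Finset.mul_sum, hcolS c, mul_zero]
  -- upper bound
  have hub : (A * S).rank ≤ n - 1 := by
    rcases Nat.eq_zero_or_pos n with hn | hn
    · subst hn
      simpa using Matrix.rank_le_card_height (A * S)
    · set φ : (Fin n → ℚ) →ₗ[ℚ] ℚ := ∑ i, LinearMap.proj i with hφ
      have hφapp : ∀ x : Fin n → ℚ, φ x = ∑ i, x i := by
        intro x; simp [hφ]
      have hφsurj : Function.Surjective φ := by
        intro a
        refine ⟨Pi.single ⟨0, hn⟩ a, ?_⟩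
        rw [hφapp]
        simp [Finset.sum_pi_single]
      have hkerφ : Module.finrank ℚ (LinearMap.ker φ) = n - 1 := by
        have h1 := LinearMap.finrank_range_add_finrank_ker φ
        have h2 : LinearMap.range φ = ⊤ := LinearMap.range_eq_top.mpr hφsurj
        rw [h2] at h1
        simp only [finrank_top] at h1
        have : Module.finrank ℚ ℚ = 1 := Module.finrank_self ℚ
        have hn' : Module.finrank ℚ (Fin n → ℚ) = n := by simp
        omega
      have hle : LinearMap.range (A * S).mulVecLin ≤ LinearMap.ker φ := by
        rintro x ⟨y, rfl⟩
        rw [LinearMap.mem_ker, hφapp]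
        simp only [Matrix.mulVecLin_apply, Matrix.mulVec, dotProduct]
        rw [Finset.sum_comm]
        have : ∀ c : Fin r, ∑ i, (A * S) i c * y c = (∑ i, (A * S) i c) * y c := by
          intro c; rw [Finset.sum_mul]
        rw [Finset.sum_congr rfl fun c _ => this c]
        simp [hcolAS]
      calc (A * S).rank ≤ Module.finrank ℚ (LinearMap.ker φ) := Submodule.finrank_mono hle
        _ = n - 1 := hkerφ
  omega
end

section
/- The formal Jacobian matrix (over ℤ[x_1,...,x_n]) and the log-matrix of a finite set F of monomials have the same set of positions of zero minors; in particular they have the same rank. -/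
/-!
Euler's identity `x_i ∂_i x^v = v_i x^v` says that
`Θ · diag(x_1, …, x_n) = diag(x^{v_1}, …, x^{v_q}) · Aᵀ`, with `A` read as a matrix of constant
polynomials. The diagonal factors have nonzero determinants in the domain `ℤ[x]`, so a minor of
`Θ` times a monomial equals the corresponding minor of `Aᵀ` times a monomial, and
`rank Θ = rank Aᵀ` over `ℤ[x]`. To compare this with the rank of `A` over `ℤ`, note that over a domain the rank of a
matrix is the size of a maximal linearly independent family of columns, and such a family stays
independent and maximal under an injective extension of scalars.
-/

open MvPolynomial Submodule Module

theorem finrank_span_range_eq_ncard {R M ι : Type*} [CommRing R] [IsDomain R] [AddCommGroup M]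
    [Module R M] [IsTorsionFree R M] [Finite ι] {v : ι → M} {s : Set ι}
    (hs : LinearIndepOn R v s) (hv : ∀ i, ∃ a : R, a ≠ 0 ∧ a • v i ∈ span R (v '' s)) :
    finrank R (span R (Set.range v)) = s.ncard := by
  classical
  have : Fintype ι := Fintype.ofFinite ι
  have : Module.Finite R (span R (v '' s)) := .span_of_finite R (s.toFinite.image v)
  have : Module.Finite R (span R (Set.range v)) := .span_of_finite R (Set.finite_range v)
  have hcard : finrank R (span R (v '' s)) = s.ncard := by
    rw [Set.image_eq_range, finrank_span_eq_card hs, ← Nat.card_eq_fintype_card,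
      Nat.card_coe_set_eq]
  refine le_antisymm ?_ (hcard ▸ finrank_mono (span_mono (Set.image_subset_range v s)))
  choose a ha0 ha using hv
  set d := ∏ i, a i
  have hd : d ≠ 0 := Finset.prod_ne_zero_iff.2 fun i _ => ha0 i
  have hmaps : span R (Set.range v) ≤ (span R (v '' s)).comap (d • LinearMap.id) := by
    rw [span_le]
    rintro - ⟨i, rfl⟩
    have := Submodule.smul_mem _ (∏ j ∈ Finset.univ.erase i, a j) (ha i)
    rwa [smul_smul, Finset.prod_erase_mul _ _ (Finset.mem_univ i)] at this
  rw [← hcard]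
  exact LinearMap.finrank_le_finrank_of_injective (f := (d • LinearMap.id).restrict hmaps)
    fun x y hxy => Subtype.ext (smul_right_injective M hd (congrArg Subtype.val hxy))

namespace Matrix

variable {m n : Type*}

theorem rank_map_algebraMap [Finite m] [Fintype n] {R S : Type*} [CommRing R] [CommRing S]
    [IsDomain S] [Algebra R S] [FaithfulSMul R S] (A : Matrix m n R) :
    (A.map (algebraMap R S)).rank = A.rank := by
  have : IsDomain R := .of_faithfulSMul R S
  obtain ⟨s, hs, hmax⟩ := exists_maximal_linearIndepOn R A.col
  have hv : ∀ i, ∃ a : R, a ≠ 0 ∧ a • A.col i ∈ span R (A.col '' s) := by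
    intro i
    by_cases hi : i ∈ s
    · exact ⟨1, one_ne_zero, by simpa using subset_span (Set.mem_image_of_mem _ hi)⟩
    · exact hmax i hi
  let f : (m → R) →ₗ[R] (m → S) := LinearMap.compLeft (Algebra.linearMap R S) m
  have hcol : (A.map (algebraMap R S)).col = f ∘ A.col := rfl
  rw [rank_eq_finrank_span_cols, rank_eq_finrank_span_cols, finrank_span_range_eq_ncard hs hv,
    finrank_span_range_eq_ncard (s := s)]
  · rw [hcol]
    exact linearIndependent_algebraMap_comp_iff.2 hs
  · intro i
    obtain ⟨a, ha0, ha⟩ := hv i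
    have ha0' : algebraMap R S a ≠ 0 :=
      (FaithfulSMul.algebraMap_injective R S).ne_iff' (map_zero _) |>.2 ha0
    refine ⟨algebraMap R S a, ha0', ?_⟩
    have := Submodule.mem_map_of_mem (f := f) ha
    rw [Submodule.map_span, ← Set.image_comp, ← hcol] at this
    rw [algebraMap_smul, hcol, Function.comp_apply, ← map_smul]
    exact span_le_restrictScalars R S _ this

theorem rank_transpose_of_isDomain [Fintype m] [Fintype n] {R : Type*} [CommRing R]
    [IsDomain R] (A : Matrix m n R) : Aᵀ.rank = A.rank := by
  rw [← rank_map_algebraMap (S := FractionRing R) Aᵀ,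
    ← rank_map_algebraMap (S := FractionRing R) A, transpose_map, rank_transpose]

variable {R : Type*} [CommRing R] [IsDomain R] {Θ N : Matrix m n R} {d : n → R} {e : m → R}

theorem det_submatrix_eq_zero_iff_of_diagonal_scaling (hd : ∀ i, d i ≠ 0) (he : ∀ j, e j ≠ 0)
    (h : ∀ i j, Θ i j * d j = e i * N i j) {k : Type*} [Fintype k] [DecidableEq k]
    (a : k → m) (b : k → n) : (Θ.submatrix a b).det = 0 ↔ (N.submatrix a b).det = 0 := by
  have hsub : Θ.submatrix a b * diagonal (d ∘ b) = diagonal (e ∘ a) * N.submatrix a b := by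
    ext p r
    rw [mul_diagonal, diagonal_mul]
    exact h (a p) (b r)
  have hdet := congrArg det hsub
  rw [det_mul, det_mul, det_diagonal, det_diagonal] at hdet
  have hd' : ∏ r, d (b r) ≠ 0 := Finset.prod_ne_zero_iff.2 fun r _ => hd (b r)
  have he' : ∏ p, e (a p) ≠ 0 := Finset.prod_ne_zero_iff.2 fun p _ => he (a p)
  constructor <;> intro h0
  · simpa [h0, he'] using hdet.symm
  · simpa [h0, hd'] using hdet

theorem rank_eq_of_diagonal_scaling [Fintype m] [Fintype n] [DecidableEq m] [DecidableEq n]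
    (hd : ∀ i, d i ≠ 0) (he : ∀ j, e j ≠ 0) (h : ∀ i j, Θ i j * d j = e i * N i j) :
    Θ.rank = N.rank := by
  have hmat : Θ * diagonal d = diagonal e * N := by
    ext i j
    rw [mul_diagonal, diagonal_mul]
    exact h i j
  rw [← rank_mul_eq_left_of_det_ne_zero (diagonal d) Θ
      (det_diagonal (d := d) ▸ Finset.prod_ne_zero_iff.2 fun i _ => hd i), hmat,
    rank_mul_eq_right_of_det_ne_zero (diagonal e) N
      (det_diagonal (d := e) ▸ Finset.prod_ne_zero_iff.2 fun j _ => he j)]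

end Matrix

open Matrix in
/-- The formal Jacobian matrix (over `ℤ[x_1,…,x_n]`) and the log-matrix of a finite
set of monomials `x^{v_1},…,x^{v_q}` have the same positions of zero minors; in
particular they have the same rank. -/
theorem stmt_9 (n q : ℕ) (v : Fin q → (Fin n →₀ ℕ))
    (Θ : Matrix (Fin q) (Fin n) (MvPolynomial (Fin n) ℤ))
    (hΘ : ∀ j i, Θ j i = pderiv i (monomial (v j) (1 : ℤ)))
    (A : Matrix (Fin n) (Fin q) ℤ) (hA : ∀ i j, A i j = ((v j) i : ℤ)) :
    (∀ (s : ℕ) (a : Fin s → Fin q) (b : Fin s → Fin n),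
      ((Matrix.of fun p r : Fin s => Θ (a p) (b r)).det = 0 ↔
        (Matrix.of fun p r : Fin s => A (b p) (a r)).det = 0)) ∧
    Θ.rank = A.rank := by
  have hX : ∀ i, (X i : MvPolynomial (Fin n) ℤ) ≠ 0 := X_ne_zero
  have hmono : ∀ j, monomial (v j) (1 : ℤ) ≠ 0 := fun j => by simp
  have euler : ∀ j i, Θ j i * X i = monomial (v j) (1 : ℤ) * (A.map C)ᵀ j i := by
    intro j i
    rw [hΘ, mul_comm, X_mul_pderiv_monomial, transpose_apply, map_apply, hA, nsmul_eq_mul,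
      mul_comm, map_natCast]
  refine ⟨fun s a b => ?_, ?_⟩
  · rw [← submatrix, det_submatrix_eq_zero_iff_of_diagonal_scaling hX hmono euler,
      show (A.map C)ᵀ.submatrix a b = ((of fun p r => A (b p) (a r)).map C)ᵀ from rfl,
      det_transpose, ← RingHom.mapMatrix_apply, ← RingHom.map_det, C_eq_zero]
  · rw [rank_eq_of_diagonal_scaling hX hmono euler, ← transpose_map, ← algebraMap_eq,
      rank_map_algebraMap, rank_transpose_of_isDomain]
end

section
/- Let T(F) be the Taylor syzygy matrix of a finite set F of monomials, i.e., the matrix whose columns, indexed by pairs j < ℓ, are (lcm(x^{v_j}, x^{v_ℓ})/x^{v_j})·e_j − (lcm(x^{v_j}, x^{v_ℓ})/x^{v_ℓ})·e_ℓ. Then any nonzero minor of T(F) is a monomial with coefficient ±1. -/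
open MvPolynomial

private def incMat {ι : Type*} [DecidableEq ι] {s : ℕ} (α β γ : Fin s → ι) :
    Matrix (Fin s) (Fin s) ℤ :=
  Matrix.of fun p r => if α p = β r then 1 else if α p = γ r then -1 else 0

private lemma incMat_det (s : ℕ) : ∀ {ι : Type*} [DecidableEq ι] (α β γ : Fin s → ι),
    (∀ r, β r ≠ γ r) →
    (incMat α β γ).det = 0 ∨ (incMat α β γ).det = 1 ∨ (incMat α β γ).det = -1 := by
  induction s with
  | zero =>
    intro ι _ α β γ _
    right; left; exact Matrix.det_fin_zero
  | succ m ih =>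
    intro ι _ α β γ h
    by_cases hinj : Function.Injective α
    · by_cases hcol : ∀ r, (∃ p, α p = β r) ∧ (∃ p, α p = γ r)
      · left
        have hdet : ((incMat α β γ).map (Int.castRingHom ℚ)).det = 0 := by
          rw [← Matrix.exists_vecMul_eq_zero_iff]
          refine ⟨1, one_ne_zero, ?_⟩
          funext r
          obtain ⟨⟨pβ, hpβ⟩, ⟨pγ, hpγ⟩⟩ := hcol r
          have hne : pβ ≠ pγ := fun hE => h r (by rw [← hpβ, hE, hpγ])
          have hent : ∀ p, ((incMat α β γ p r : ℤ) : ℚ)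
              = (if p = pβ then (1 : ℚ) else 0) + (if p = pγ then -1 else 0) := by
            intro p
            simp only [incMat, Matrix.of_apply]
            by_cases h1 : p = pβ
            · simp [h1, hpβ, hne]
            · by_cases h2 : p = pγ
              · have hg : α p = γ r := h2 ▸ hpγ
                have hx : ¬ α p = β r := fun hc => h r (hc.symm.trans hg)
                subst h2
                simp [hx, hg, hne.symm, Ne.symm (h r)]
              · have hx1 : ¬ α p = β r := fun hc => h1 (hinj (hc.trans hpβ.symm))
                have hx2 : ¬ α p = γ r := fun hc => h2 (hinj (hc.trans hpγ.symm))
                simp [hx1, hx2, h1, h2]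
          simp only [Matrix.vecMul, dotProduct, Pi.one_apply, one_mul,
            Matrix.map_apply, Int.coe_castRingHom, Pi.zero_apply]
          rw [Finset.sum_congr rfl fun p _ => hent p, Finset.sum_add_distrib]
          simp [hne]
        have hq : ((incMat α β γ).det : ℚ) = 0 :=
          (RingHom.map_det (Int.castRingHom ℚ) (incMat α β γ)).trans hdet
        exact_mod_cast hq
      · push_neg at hcol
        obtain ⟨r0, hr0⟩ := hcol
        have hr0' : (∀ p, α p ≠ β r0) ∨ (∀ p, α p ≠ γ r0) := by
          by_cases hb : ∃ p, α p = β r0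
          · exact Or.inr (hr0 hb)
          · push_neg at hb; exact Or.inl hb
        have key : ∀ x, incMat α β γ x r0 ≠ 0 → α x = β r0 ∨ α x = γ r0 := by
          intro x hx
          by_contra hcon
          push_neg at hcon
          simp [incMat, hcon.1, hcon.2] at hx
        have hone : ∀ p p', incMat α β γ p r0 ≠ 0 → incMat α β γ p' r0 ≠ 0 → p = p' := by
          intro p p' hp hp'
          rcases hr0' with hmiss | hmiss
          · have h1 := (key p hp).resolve_left (hmiss p)
            have h2 := (key p' hp').resolve_left (hmiss p')
            exact hinj (h1.trans h2.symm)
          · have h1 := (key p hp).resolve_right (hmiss p)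
            have h2 := (key p' hp').resolve_right (hmiss p')
            exact hinj (h1.trans h2.symm)
        rw [Matrix.det_succ_column _ r0]
        by_cases hex : ∃ p0, incMat α β γ p0 r0 ≠ 0
        · obtain ⟨p0, hp0⟩ := hex
          rw [Finset.sum_eq_single p0
            (fun p _ hp => by
              have hz : incMat α β γ p r0 = 0 := by
                by_contra hc; exact hp (hone p p0 hc hp0)
              rw [hz]; ring)
            (fun hmem => absurd (Finset.mem_univ p0) hmem)]
          have hEq : (incMat α β γ).submatrix p0.succAbove r0.succAbove
              = incMat (α ∘ p0.succAbove) (β ∘ r0.succAbove) (γ ∘ r0.succAbove) := rfl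
          rw [hEq]
          have hsub := ih (α ∘ p0.succAbove) (β ∘ r0.succAbove) (γ ∘ r0.succAbove)
            (fun r => h _)
          have hval : incMat α β γ p0 r0 = 1 ∨ incMat α β γ p0 r0 = -1 := by
            simp only [incMat, Matrix.of_apply] at hp0 ⊢
            split_ifs at hp0 ⊢ <;> simp_all
          have hsign := neg_one_pow_eq_or ℤ ((p0 : ℕ) + (r0 : ℕ))
          rcases hsign with h1 | h1 <;> rcases hval with h2 | h2 <;>
            rcases hsub with h3 | h3 | h3 <;> rw [h1, h2, h3] <;> norm_num
        · push_neg at hex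
          left
          rw [Finset.sum_eq_zero]
          intro p _
          rw [hex p]; ring
    · left
      rw [Function.not_injective_iff] at hinj
      obtain ⟨p, p', heq, hnep⟩ := hinj
      apply Matrix.det_zero_of_row_eq hnep
      funext r
      simp [incMat, heq]

private lemma prod_monomial_one {σ K : Type*} [CommSemiring K] :
    ∀ {m : ℕ} (d : Fin m → (σ →₀ ℕ)),
      (∏ i, MvPolynomial.monomial (d i) (1 : K)) = MvPolynomial.monomial (∑ i, d i) 1
  | 0, d => by simp
  | (m + 1), d => by
    rw [Fin.prod_univ_succ, Fin.sum_univ_succ, prod_monomial_one (fun i => d i.succ),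
      monomial_mul, one_mul]

/-- Any nonzero minor of the Taylor syzygy matrix `T(F)` of a finite set of monomials
`F = {x^{v_1},…,x^{v_q}}` (whose column indexed by a pair `j < ℓ` is
`(lcm(x^{v_j},x^{v_ℓ})/x^{v_j})·e_j − (lcm(x^{v_j},x^{v_ℓ})/x^{v_ℓ})·e_ℓ`) is a
monomial with coefficient `±1`. -/
theorem stmt_10 (n q : ℕ) (k : Type*) [Field k]
    (v : Fin q → (Fin n →₀ ℕ))
    (T : Matrix (Fin q) {p : Fin q × Fin q // p.1 < p.2} (MvPolynomial (Fin n) k))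
    (hT : ∀ (c : {p : Fin q × Fin q // p.1 < p.2}) (j : Fin q),
      T j c =
        if j = c.1.1 then monomial ((v c.1.1 ⊔ v c.1.2) - v c.1.1) (1 : k)
        else if j = c.1.2 then - monomial ((v c.1.1 ⊔ v c.1.2) - v c.1.2) (1 : k)
        else 0)
    (s : ℕ) (a : Fin s → Fin q) (b : Fin s → {p : Fin q × Fin q // p.1 < p.2})
    (hne : (Matrix.of fun p r : Fin s => T (a p) (b r)).det ≠ 0) :
    ∃ (w : Fin n →₀ ℕ) (c : k),
      (c = 1 ∨ c = -1) ∧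
      (Matrix.of fun p r : Fin s => T (a p) (b r)).det = monomial w c := by
  classical
  set P : MvPolynomial (Fin n) k := (Matrix.of fun p r : Fin s => T (a p) (b r)).det with hPdef
  set E : Matrix (Fin s) (Fin s) ℤ :=
    incMat a (fun r => (b r).1.1) (fun r => (b r).1.2) with hEdef
  have hβγ : ∀ r : Fin s, (b r).1.1 ≠ (b r).1.2 := fun r => ne_of_lt (b r).2
  set A : Fin n →₀ ℕ := ∑ p, v (a p) with hA
  set B : Fin n →₀ ℕ := ∑ r, (v (b r).1.1 ⊔ v (b r).1.2) with hB
  set c : k := ((E.det : ℤ) : k) with hc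
  have hent : ∀ p r, monomial (v (a p)) (1 : k) * T (a p) (b r)
      = monomial (v (b r).1.1 ⊔ v (b r).1.2) 1 * ((E p r : ℤ) : MvPolynomial (Fin n) k) := by
    intro p r
    rw [hT]
    by_cases h1 : a p = (b r).1.1
    · have hE : E p r = 1 := by simp [hEdef, incMat, h1]
      rw [hE, if_pos h1, h1, monomial_mul, one_mul,
        add_tsub_cancel_of_le (le_sup_left : v (b r).1.1 ≤ _)]
      push_cast
      ring
    · by_cases h2 : a p = (b r).1.2
      · have hE : E p r = -1 := by simp [hEdef, incMat, h1, h2, Ne.symm (hβγ r)]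
        rw [hE, if_neg h1, if_pos h2, mul_neg, h2, monomial_mul, one_mul,
          add_tsub_cancel_of_le (le_sup_right : v (b r).1.2 ≤ _)]
        push_cast
        ring
      · have hE : E p r = 0 := by simp [hEdef, incMat, h1, h2]
        rw [hE, if_neg h1, if_neg h2]
        push_cast
        ring
  have hdet2 : monomial A (1 : k) * P = monomial B c := by
    have lhs : (Matrix.of fun p r : Fin s =>
        monomial (v (a p)) (1 : k) * T (a p) (b r)).det = monomial A 1 * P :=
      (Matrix.det_mul_column (fun p => monomial (v (a p)) (1 : k))
        (Matrix.of fun p r : Fin s => T (a p) (b r))).trans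
        (by rw [prod_monomial_one])
    have rhs : (Matrix.of fun p r : Fin s =>
        monomial (v (b r).1.1 ⊔ v (b r).1.2) (1 : k) *
          ((E p r : ℤ) : MvPolynomial (Fin n) k)).det = monomial B c := by
      refine (Matrix.det_mul_row
        (fun r => monomial (v (b r).1.1 ⊔ v (b r).1.2) (1 : k))
        (E.map (Int.castRingHom (MvPolynomial (Fin n) k)))).trans ?_
      rw [prod_monomial_one, ← RingHom.mapMatrix_apply, ← RingHom.map_det, eq_intCast,
        show ((E.det : ℤ) : MvPolynomial (Fin n) k) = C c from (map_intCast
          (C : k →+* MvPolynomial (Fin n) k) E.det).symm,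
        mul_comm, C_mul_monomial, mul_one]
    have hmat : (Matrix.of fun p r : Fin s =>
        monomial (v (a p)) (1 : k) * T (a p) (b r))
        = (Matrix.of fun p r : Fin s =>
            monomial (v (b r).1.1 ⊔ v (b r).1.2) (1 : k) *
              ((E p r : ℤ) : MvPolynomial (Fin n) k)) :=
      Matrix.ext fun p r => hent p r
    rw [← lhs, hmat, rhs]
  have hPne : P ≠ 0 := hne
  obtain ⟨w0, hw0⟩ := support_nonempty.mpr hPne
  have hcoef : ∀ m, coeff m P ≠ 0 → B = A + m ∧ coeff m P = c := by
    intro m hm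
    have h5 : coeff (A + m) (monomial A (1 : k) * P) = coeff m P := by
      rw [coeff_monomial_mul, one_mul]
    rw [hdet2, coeff_monomial] at h5
    by_cases h6 : B = A + m
    · refine ⟨h6, ?_⟩
      rw [if_pos h6] at h5
      exact h5.symm
    · rw [if_neg h6] at h5
      exact absurd h5.symm hm
  have hm0 := hcoef w0 (mem_support_iff.mp hw0)
  have hcne : c ≠ 0 := fun h0 => (mem_support_iff.mp hw0) (hm0.2.trans h0)
  have hEdne : E.det ≠ 0 := fun h0 => hcne (by rw [hc, h0]; simp)
  have hEd0 := incMat_det s a (fun r => (b r).1.1) (fun r => (b r).1.2) hβγ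
  rw [← hEdef] at hEd0
  have hEd : E.det = 1 ∨ E.det = -1 := hEd0.resolve_left hEdne
  refine ⟨w0, c, ?_, ?_⟩
  · rcases hEd with h0 | h0 <;> [left; right] <;> rw [hc, h0] <;> simp
  · refine MvPolynomial.ext _ _ fun m => ?_
    by_cases hm : m = w0
    · subst hm
      rw [coeff_monomial, if_pos rfl]
      exact hm0.2
    · rw [coeff_monomial, if_neg fun hh => hm hh.symm]
      by_contra hc0
      exact hm ((add_right_injective A) ((hcoef m hc0).1.symm.trans hm0.1))
end

section
/- Let F = {f_1,...,f_q} ⊆ k[x_1,...,x_n] be forms of degree d ≥ 2, and suppose the variables partition as x = y ∪ z with F = G ∪ H, where G ≠ ∅ involves only y-variables and H ≠ ∅ involves only z-variables. Then the extension k[F] ⊆ k[x_d] is not birational. -/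
open MvPolynomial

section Aux

variable {n d : ℕ} {k : Type*} [Field k] (Y : Finset (Fin n))

/-- The weight function: `1` on variables in `Y`, `0` elsewhere. -/
def auxWgt : Fin n → ℕ := fun i => if i ∈ Y then 1 else 0

/-- The subalgebra of polynomials all of whose monomials have `Y`-weight divisible by `d`. -/
def auxSubalg (d : ℕ) (k : Type*) [Field k] (Y : Finset (Fin n)) :
    Subalgebra k (MvPolynomial (Fin n) k) where
  carrier := {p | ∀ m ∈ p.support, d ∣ Finsupp.weight (auxWgt Y) m}
  mul_mem' := by
    classical
    intro p q hp hq m hm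
    have := MvPolynomial.support_mul p q hm
    obtain ⟨a, ha, b, hb, rfl⟩ := Finset.mem_add.1 this
    rw [map_add]
    exact Nat.dvd_add (hp a ha) (hq b hb)
  add_mem' := by
    classical
    intro p q hp hq m hm
    rcases Finset.mem_union.1 (MvPolynomial.support_add hm) with h | h
    · exact hp m h
    · exact hq m h
  algebraMap_mem' := by
    classical
    intro c m hm
    have h := MvPolynomial.mem_support_iff.1 hm
    rw [MvPolynomial.algebraMap_eq, MvPolynomial.coeff_C] at h
    by_cases h0 : m = 0
    · subst h0; simp
    · simp [Ne.symm h0] at h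

/-- The set of quotients of elements of `auxSubalg` is a subfield of the fraction field. -/
noncomputable def auxSubfield (d : ℕ) (k : Type*) [Field k] (Y : Finset (Fin n)) :
    Subfield (FractionRing (MvPolynomial (Fin n) k)) where
  carrier := {x | ∃ p ∈ auxSubalg d k Y, ∃ q ∈ auxSubalg d k Y, q ≠ 0 ∧
      x = algebraMap (MvPolynomial (Fin n) k) (FractionRing (MvPolynomial (Fin n) k)) p /
        algebraMap (MvPolynomial (Fin n) k) (FractionRing (MvPolynomial (Fin n) k)) q}
  one_mem' := ⟨1, one_mem _, 1, one_mem _, one_ne_zero, by simp⟩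
  zero_mem' := ⟨0, zero_mem _, 1, one_mem _, one_ne_zero, by simp⟩
  neg_mem' := by
    rintro x ⟨p, hp, q, hq, hq0, rfl⟩
    exact ⟨-p, neg_mem hp, q, hq, hq0, by rw [map_neg, neg_div]⟩
  mul_mem' := by
    rintro x y ⟨p, hp, q, hq, hq0, rfl⟩ ⟨p', hp', q', hq', hq'0, rfl⟩
    exact ⟨p * p', mul_mem hp hp', q * q', mul_mem hq hq', mul_ne_zero hq0 hq'0, by
      rw [map_mul, map_mul, div_mul_div_comm]⟩
  add_mem' := by
    rintro x y ⟨p, hp, q, hq, hq0, rfl⟩ ⟨p', hp', q', hq', hq'0, rfl⟩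
    have hq0' : algebraMap (MvPolynomial (Fin n) k) (FractionRing (MvPolynomial (Fin n) k)) q ≠ 0 := by
      simpa using hq0
    have hq'0' : algebraMap (MvPolynomial (Fin n) k) (FractionRing (MvPolynomial (Fin n) k)) q' ≠ 0 := by
      simpa using hq'0
    exact ⟨p * q' + q * p', add_mem (mul_mem hp hq') (mul_mem hq hp'),
      q * q', mul_mem hq hq', mul_ne_zero hq0 hq'0, by
        rw [div_add_div _ _ hq0' hq'0', RingHom.map_add, RingHom.map_mul,
          RingHom.map_mul, RingHom.map_mul]⟩
  inv_mem' := by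
    rintro x ⟨p, hp, q, hq, hq0, rfl⟩
    by_cases hp0 : p = 0
    · exact ⟨0, zero_mem _, 1, one_mem _, one_ne_zero, by simp [hp0]⟩
    · exact ⟨q, hq, p, hp, hp0, by rw [inv_div]⟩

end Aux

/-- Let `F = {f_1,…,f_q}` be nonzero forms of degree `d ≥ 2` and suppose the
variables split into a nontrivial partition `x = y ∪ z` (given by `Y` and its
complement) with `F = G ∪ H`, where `G ≠ ∅` involves only the `y`-variables and
`H ≠ ∅` involves only the `z`-variables.  Then `k[F] ⊆ k[x_d]` is not birational. -/
theorem stmt_12 (n q d : ℕ) (hd : 2 ≤ d) (k : Type*) [Field k]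
    (f : Fin q → MvPolynomial (Fin n) k)
    (hhom : ∀ j, (f j).IsHomogeneous d) (hf0 : ∀ j, f j ≠ 0)
    (Y : Finset (Fin n)) (hY : Y.Nonempty) (hYc : Yᶜ.Nonempty)
    (P : Fin q → Prop)
    (hG : ∀ j, P j → (f j).vars ⊆ Y)
    (hH : ∀ j, ¬ P j → (f j).vars ⊆ Yᶜ)
    (hGne : ∃ j, P j) (hHne : ∃ j, ¬ P j) :
    fractionFieldOf n k (Set.range f) ≠
      fractionFieldOf n k
        {p | ∃ w : Fin n →₀ ℕ, (∑ i, w i) = d ∧ p = monomial w (1 : k)} := by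
  classical
  obtain ⟨i0, hi0⟩ := hY
  obtain ⟨j0, hj0⟩ := hYc
  have hj0' : j0 ∉ Y := Finset.mem_compl.1 hj0
  have hij : i0 ≠ j0 := fun h => hj0' (h ▸ hi0)
  -- the witness monomial
  set w0 : Fin n →₀ ℕ := Finsupp.single i0 (d - 1) + Finsupp.single j0 1 with hw0
  have hw0sum : (∑ i, w0 i) = d := by
    have h : ∀ i : Fin n, w0 i =
        (if i0 = i then d - 1 else 0) + (if j0 = i then 1 else 0) := by
      intro i
      rw [hw0, Finsupp.add_apply, Finsupp.single_apply, Finsupp.single_apply]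
    simp only [h, Finset.sum_add_distrib, Finset.sum_ite_eq Finset.univ,
      Finset.mem_univ, if_true]
    omega
  have hw0wgt : Finsupp.weight (auxWgt Y) w0 = d - 1 := by
    rw [hw0, map_add]
    have h1 : Finsupp.weight (auxWgt Y) (Finsupp.single i0 (d - 1)) = d - 1 := by
      rw [Finsupp.weight_apply, Finsupp.sum_single_index] <;> simp [auxWgt, hi0]
    have h2 : Finsupp.weight (auxWgt Y) (Finsupp.single j0 1) = 0 := by
      rw [Finsupp.weight_apply, Finsupp.sum_single_index] <;> simp [auxWgt, hj0']
    rw [h1, h2]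
    omega
  -- each f j lies in the subalgebra
  have hfB : ∀ j, f j ∈ auxSubalg d k Y := by
    intro j m hm
    have hcoeff : MvPolynomial.coeff m (f j) ≠ 0 := MvPolynomial.mem_support_iff.1 hm
    by_cases hPj : P j
    · -- weight = degree = d
      have hsup : ∀ i, m i ≠ 0 → i ∈ Y := by
        intro i hi
        exact hG j hPj ((MvPolynomial.mem_vars i).2 ⟨m, hm, Finsupp.mem_support_iff.2 hi⟩)
      have : Finsupp.weight (auxWgt Y) m = Finsupp.weight (1 : Fin n → ℕ) m := by
        rw [Finsupp.weight_apply, Finsupp.weight_apply]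
        apply Finsupp.sum_congr
        intro i hi
        have := hsup i (Finsupp.mem_support_iff.1 hi)
        simp [auxWgt, this]
      rw [this, hhom j hcoeff]
    · -- weight = 0
      have hsup : ∀ i, m i ≠ 0 → i ∉ Y := by
        intro i hi
        exact Finset.mem_compl.1
          (hH j hPj ((MvPolynomial.mem_vars i).2 ⟨m, hm, Finsupp.mem_support_iff.2 hi⟩))
      have : Finsupp.weight (auxWgt Y) m = 0 := by
        rw [Finsupp.weight_apply, Finsupp.sum]
        apply Finset.sum_eq_zero
        intro i hi
        have := hsup i (Finsupp.mem_support_iff.1 hi)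
        simp [auxWgt, this]
      rw [this]
      exact dvd_zero d
  -- LHS is contained in the auxiliary subfield
  have hLHS : fractionFieldOf n k (Set.range f) ≤ auxSubfield d k Y := by
    apply Subfield.closure_le.2
    rintro x ⟨p, hp, rfl⟩
    have hpB : p ∈ auxSubalg d k Y := by
      have : Algebra.adjoin k (Set.range f) ≤ auxSubalg d k Y := by
        apply Algebra.adjoin_le
        rintro _ ⟨j, rfl⟩
        exact hfB j
      exact this hp
    exact ⟨p, hpB, 1, one_mem _, one_ne_zero, by simp⟩
  -- the witness monomial is in the RHS
  intro heq
  have hmem : (algebraMap (MvPolynomial (Fin n) k) (FractionRing (MvPolynomial (Fin n) k))) (monomial w0 (1 : k)) ∈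
      fractionFieldOf n k
        {p | ∃ w : Fin n →₀ ℕ, (∑ i, w i) = d ∧ p = monomial w (1 : k)} := by
    apply Subfield.subset_closure
    exact ⟨monomial w0 1, Algebra.subset_adjoin ⟨w0, hw0sum, rfl⟩, rfl⟩
  rw [← heq] at hmem
  obtain ⟨p, hpB, qq, hqB, hq0, hx⟩ := hLHS hmem
  -- turn the fraction-field identity into a polynomial identity
  have hq0' : algebraMap (MvPolynomial (Fin n) k) (FractionRing (MvPolynomial (Fin n) k)) qq ≠ 0 := by simpa using hq0
  have hpoly : monomial w0 (1 : k) * qq = p := by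
    apply IsFractionRing.injective (MvPolynomial (Fin n) k) (FractionRing (MvPolynomial (Fin n) k))
    rw [map_mul, hx]
    exact div_mul_cancel₀ _ hq0'
  have hm0 : monomial w0 (1 : k) ≠ 0 := by
    simp
  have hp0 : p ≠ 0 := by
    rw [← hpoly]
    exact mul_ne_zero hm0 hq0
  obtain ⟨m', hm'⟩ := (MvPolynomial.support_nonempty.2 hp0)
  have hdiv : d ∣ Finsupp.weight (auxWgt Y) m' := hpB m' hm'
  -- m' = w0 + something in qq.support
  have hm'mul : m' ∈ (monomial w0 (1 : k) * qq).support := by rw [hpoly]; exact hm'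
  have := MvPolynomial.support_mul _ _ hm'mul
  have hsupm : (monomial w0 (1 : k)).support = {w0} := by
    rw [MvPolynomial.support_monomial]
    simp
  rw [hsupm] at this
  obtain ⟨a, ha, b, hb, rfl⟩ := Finset.mem_add.1 this
  rcases Finset.mem_singleton.1 ha with rfl
  have hdivb : d ∣ Finsupp.weight (auxWgt Y) b := hqB b hb
  rw [map_add, hw0wgt] at hdiv
  have : d ∣ d - 1 := by simpa using Nat.dvd_sub hdiv hdivb
  have := Nat.le_of_dvd (by omega) this
  omega
end

section
/- Let F = {x^{v_1},...,x^{v_q}} be a set of monomials of degree 2 in k[x_1,...,x_n] with no nontrivial common factor. Then the linear syzygy matrix LS(F) has rank q - 1 if and only if F is cohesive (i.e., F cannot be partitioned into two nonempty subsets involving disjoint sets of variables). -/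
/-!
Two monomials of degree two admit a linear syzygy `x_a x^{v_j} = x_b x^{v_l}` exactly when they
share a variable. If a set `S` of the monomials shares no variable with its complement, the row
vector with entries `x^{v_j}` for `j ∈ S` and `0` elsewhere kills every column of `LS(F)`. Taking
`S` to be everything bounds the rank by `q - 1`, and a splitting `S, Sᶜ` gives two independent
such rows, so the rank is at most `q - 2`. Conversely, if `F` is cohesive then the graph whose
edges join monomials sharing a variable is connected. Fix a root and join every other vertex to
a neighbour closer to the root. The resulting `q - 1` columns are triangular with respect to the
distance to the root, so they are independent. Ranks are taken over the polynomial ring, a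
domain, where rank-nullity still holds.
-/

namespace Finsupp

variable {σ : Type*}

theorem exists_eq_single_add_single_of_degree_eq_two {w : σ →₀ ℕ} (hw : w.degree = 2) {c : σ}
    (hc : w c ≠ 0) : ∃ d, w = single c 1 + single d 1 := by
  have hle : single c 1 ≤ w := single_le_iff.mpr (Nat.one_le_iff_ne_zero.mpr hc)
  have hsplit := add_tsub_cancel_of_le hle
  obtain ⟨d, hd⟩ : w - single c 1 ∈ Set.range fun a => single a 1 := by
    rw [range_single_one]
    have := congrArg degree hsplit
    rw [map_add, degree_single, hw] at this
    show degree _ = 1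
    omega
  exact ⟨d, by rw [← hsplit, ← hd]⟩

theorem exists_single_add_eq_single_add_of_not_disjoint {w₁ w₂ : σ →₀ ℕ} (h₁ : w₁.degree = 2)
    (h₂ : w₂.degree = 2) (h : ¬ Disjoint w₁.support w₂.support) :
    ∃ a b, single a 1 + w₁ = single b 1 + w₂ := by
  obtain ⟨c, hc₁, hc₂⟩ := Finset.not_disjoint_iff.mp h
  obtain ⟨d, rfl⟩ := exists_eq_single_add_single_of_degree_eq_two h₁ (mem_support_iff.mp hc₁)
  obtain ⟨e, rfl⟩ := exists_eq_single_add_single_of_degree_eq_two h₂ (mem_support_iff.mp hc₂)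
  exact ⟨e, d, by abel⟩

theorem not_disjoint_support_of_single_add_eq {w₁ w₂ : σ →₀ ℕ} (h₁ : w₁.degree = 2) {a b : σ}
    (h : single a 1 + w₁ = single b 1 + w₂) : ¬ Disjoint w₁.support w₂.support := by
  obtain rfl | hab := eq_or_ne a b
  · obtain rfl := add_left_cancel h
    rw [disjoint_self, Finset.bot_eq_empty, support_eq_empty]
    rintro rfl
    simp at h₁
  · have hb : w₁ b ≠ 0 := by
      have := DFunLike.congr_fun h b
      simp [hab] at this
      omega
    obtain ⟨d, rfl⟩ := exists_eq_single_add_single_of_degree_eq_two h₁ hb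
    obtain rfl : w₂ = single a 1 + single d 1 := by
      apply add_left_cancel (a := single b 1)
      rw [← h, add_left_comm]
    exact Finset.not_disjoint_iff.mpr ⟨d, by simp, by simp⟩

end Finsupp

theorem linearIndependent_of_triangular {ι m R : Type*} [Fintype ι] [Ring R] [NoZeroDivisors R]
    (w : ι → m → R) (p : ι → m) (h : ι → ℕ) (hpivot : ∀ i, w i (p i) ≠ 0)
    (htri : ∀ i j, j ≠ i → w j (p i) ≠ 0 → h i < h j) : LinearIndependent R w := by
  classical
  rw [Fintype.linearIndependent_iff]
  intro g hg
  by_contra! hne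
  obtain ⟨i, hi, hmax⟩ := (Finset.univ.filter (g · ≠ 0)).exists_max_image h
    (by simpa [Finset.filter_nonempty_iff] using hne)
  have hcoord : ∑ j, g j * w j (p i) = g i * w i (p i) := by
    refine Finset.sum_eq_single i (fun j _ hji => ?_) (by simp)
    by_contra hj
    have := hmax j (by simpa using left_ne_zero_of_mul hj)
    have := htri i j hji (right_ne_zero_of_mul hj)
    omega
  have hzero := congrFun hg (p i)
  simp only [Finset.sum_apply, Pi.smul_apply, smul_eq_mul, Pi.zero_apply] at hzero
  exact mul_ne_zero (by simpa using hi) (hpivot i) (hcoord ▸ hzero)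

namespace Matrix

variable {l m n R : Type*} [CommRing R]

theorem card_le_rank_of_linearIndependent_col [Fintype n] [Nontrivial R] {ι : Type*} [Fintype ι]
    (A : Matrix m n R) (c : ι → n) (h : LinearIndependent R fun i => Aᵀ (c i)) :
    Fintype.card ι ≤ A.rank := by
  have hmem i : Aᵀ (c i) ∈ Submodule.span R (Set.range Aᵀ) := Submodule.subset_span ⟨c i, rfl⟩
  have : Module.Finite R (Submodule.span R (Set.range Aᵀ)) :=
    Module.Finite.span_of_finite R (Set.finite_range _)
  rw [rank_eq_finrank_span_cols]
  exact (LinearIndependent.of_comp (Submodule.span R (Set.range Aᵀ)).subtype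
    (v := fun i => ⟨_, hmem i⟩) h).fintype_card_le_finrank

theorem rank_add_rank_le_card_of_mul_eq_zero' [Fintype m] [Fintype n] [IsDomain R]
    {A : Matrix l m R} {B : Matrix m n R} (hAB : A * B = 0) :
    A.rank + B.rank ≤ Fintype.card m := by
  have hle : LinearMap.range B.mulVecLin ≤ LinearMap.ker A.mulVecLin := by
    rw [LinearMap.range_le_ker_iff, ← mulVecLin_mul, hAB]
    exact LinearMap.ext fun _ => zero_mulVec _
  have hnull := (LinearMap.ker A.mulVecLin).rank_quotient_add_rank
  rw [rank_fun'] at hnull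
  have hker : Module.rank R (LinearMap.ker A.mulVecLin) < Cardinal.aleph0 :=
    (le_add_self.trans hnull.le).trans_lt Cardinal.natCast_lt_aleph0
  have hquot : Module.rank R ((m → R) ⧸ LinearMap.ker A.mulVecLin) < Cardinal.aleph0 :=
    (le_self_add.trans hnull.le).trans_lt Cardinal.natCast_lt_aleph0
  have hB : B.rank ≤ Module.finrank R (LinearMap.ker A.mulVecLin) :=
    Cardinal.toNat_le_toNat (Submodule.rank_mono hle) hker
  have hA : A.rank = Module.finrank R ((m → R) ⧸ LinearMap.ker A.mulVecLin) :=
    A.mulVecLin.quotKerEquivRange.finrank_eq.symm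
  have hsum := congrArg Cardinal.toNat hnull
  rw [Cardinal.toNat_add hquot hker, Cardinal.toNat_natCast] at hsum
  rw [hA]
  exact (Nat.add_le_add_left hB _).trans hsum.le

end Matrix

namespace SimpleGraph

variable {V : Type*} {G : SimpleGraph V}

theorem preconnected_of_forall_exists_adj
    (h : ∀ S : Set V, S.Nonempty → Sᶜ.Nonempty → ∃ j ∈ S, ∃ l ∈ Sᶜ, G.Adj j l) :
    G.Preconnected := by
  intro u w
  by_contra hw
  obtain ⟨j, hj, l, hl, hadj⟩ :=
    h {x | G.Reachable u x} ⟨u, Reachable.refl u⟩ ⟨w, hw⟩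
  exact hl (Reachable.trans hj hadj.reachable)

theorem Reachable.exists_adj_dist_lt {r v : V} (h : G.Reachable v r) (hne : v ≠ r) :
    ∃ u, G.Adj v u ∧ G.dist u r < G.dist v r := by
  obtain ⟨p, hp⟩ := h.exists_walk_length_eq_dist
  cases p with
  | nil => exact absurd rfl hne
  | cons hadj p => exact ⟨_, hadj, (dist_le p).trans_lt (by simp [← hp])⟩

end SimpleGraph

open MvPolynomial Matrix

section LinearSyzygy

variable {σ ι : Type*} (k : Type*) [CommRing k]

def sharedVariableGraph (v : ι → σ →₀ ℕ) : SimpleGraph ι where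
  Adj j l := j ≠ l ∧ ¬ Disjoint (v j).support (v l).support
  symm := ⟨fun _ _ h => ⟨h.1.symm, fun hd => h.2 hd.symm⟩⟩
  loopless := ⟨fun _ h => h.1 rfl⟩

theorem preconnected_sharedVariableGraph {v : ι → σ →₀ ℕ}
    (h : ¬ ∃ S : Set ι, S.Nonempty ∧ Sᶜ.Nonempty ∧
      ∀ j ∈ S, ∀ l ∈ Sᶜ, Disjoint (v j).support (v l).support) :
    (sharedVariableGraph v).Preconnected := by
  refine SimpleGraph.preconnected_of_forall_exists_adj fun S hS hSc => ?_
  push Not at h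
  obtain ⟨j, hj, l, hl, hjl⟩ := h S hS hSc
  exact ⟨j, hj, l, hl, fun h => hl (h ▸ hj), hjl⟩

abbrev LinearRelation (v : ι → σ →₀ ℕ) :=
  {t : (σ × σ) × (ι × ι) // Finsupp.single t.1.1 1 + v t.2.1 = Finsupp.single t.1.2 1 + v t.2.2}

noncomputable def linearSyzygyMatrix [DecidableEq ι] (v : ι → σ →₀ ℕ) :
    Matrix ι (LinearRelation v) (MvPolynomial σ k) :=
  Matrix.of fun j t =>
    (if j = t.1.2.1 then X t.1.1.1 else 0) - (if j = t.1.2.2 then X t.1.1.2 else 0)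

variable [Fintype ι] [DecidableEq ι] {v : ι → σ →₀ ℕ}

theorem indicator_vecMul_linearSyzygyMatrix (hdeg : ∀ j, (v j).degree = 2) {S : Set ι}
    (hS : ∀ j ∈ S, ∀ l ∈ Sᶜ, Disjoint (v j).support (v l).support) :
    S.indicator (fun j => monomial (v j) (1 : k)) ᵥ* linearSyzygyMatrix k v = 0 := by
  funext ⟨⟨⟨a, b⟩, j, l⟩, hrel⟩
  dsimp only at hrel
  have hjl : j ∈ S ↔ l ∈ S := by
    have hshare := Finsupp.not_disjoint_support_of_single_add_eq (hdeg j) hrel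
    constructor <;> intro h <;> by_contra h'
    · exact hshare (hS j h l h')
    · exact hshare (hS l h j h').symm
  simp only [vecMul, dotProduct, linearSyzygyMatrix, of_apply, mul_sub, mul_ite,
    mul_zero, Finset.sum_sub_distrib, Finset.sum_ite_eq', Finset.mem_univ, if_true,
    Pi.zero_apply, sub_eq_zero]
  have hmono (s : σ →₀ ℕ) (c : σ) :
      monomial s (1 : k) * X c = monomial (Finsupp.single c 1 + s) 1 := by
    rw [monomial_single_add, pow_one, mul_comm]
  by_cases hj : j ∈ S
  · rw [Set.indicator_of_mem hj, Set.indicator_of_mem (hjl.mp hj), hmono, hmono, hrel]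
  · rw [Set.indicator_of_notMem hj, Set.indicator_of_notMem (mt hjl.mpr hj), zero_mul, zero_mul]

variable [Fintype (LinearRelation v)] [IsDomain k]

theorem rank_linearSyzygyMatrix_add_card_le (hdeg : ∀ j, (v j).degree = 2) {κ : Type*}
    [Fintype κ] (S : κ → Set ι)
    (hS : ∀ s, ∀ j ∈ S s, ∀ l ∈ (S s)ᶜ, Disjoint (v j).support (v l).support)
    (c : κ → ι) (hc : ∀ s s', c s ∈ S s' ↔ s = s') :
    (linearSyzygyMatrix k v).rank + Fintype.card κ ≤ Fintype.card ι := by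
  let B : Matrix κ ι (MvPolynomial σ k) :=
    Matrix.of fun s => (S s).indicator fun j => monomial (v j) 1
  have hBLS : B * linearSyzygyMatrix k v = 0 := by
    funext s
    exact indicator_vecMul_linearSyzygyMatrix k hdeg (hS s)
  have hB : Fintype.card κ ≤ B.rank := by
    refine B.card_le_rank_of_linearIndependent_col c
      (linearIndependent_of_triangular _ id (fun _ => 0) (fun s => ?_) (fun s s' hne hentry => ?_))
    · simp [B, Set.indicator_of_mem ((hc s s).mpr rfl), monomial_eq_zero]
    · simp [B, Set.indicator_of_notMem (mt (hc s' s).mp hne)] at hentry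
  have := Matrix.rank_add_rank_le_card_of_mul_eq_zero' hBLS
  omega

theorem rank_linearSyzygyMatrix_le (hdeg : ∀ j, (v j).degree = 2) :
    (linearSyzygyMatrix k v).rank ≤ Fintype.card ι - 1 := by
  obtain _ | ⟨⟨j⟩⟩ := isEmpty_or_nonempty ι
  · simpa using (linearSyzygyMatrix k v).rank_le_card_height
  have := rank_linearSyzygyMatrix_add_card_le k hdeg (κ := Unit) (fun _ => Set.univ) (by simp)
    (fun _ => j) (by simp)
  simp only [Fintype.card_unit] at this
  omega

theorem card_sub_one_le_rank_linearSyzygyMatrix (hdeg : ∀ j, (v j).degree = 2)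
    (hconn : (sharedVariableGraph v).Preconnected) :
    Fintype.card ι - 1 ≤ (linearSyzygyMatrix k v).rank := by
  obtain _ | ⟨⟨r⟩⟩ := isEmpty_or_nonempty ι
  · simp
  set G := sharedVariableGraph v
  have hparent (j : {j // j ≠ r}) : ∃ u, G.Adj j u ∧ G.dist u r < G.dist j r :=
    (hconn j r).exists_adj_dist_lt j.2
  choose u hadj hdist using hparent
  have hrel (j : {j // j ≠ r}) : ∃ a b, Finsupp.single a 1 + v j = Finsupp.single b 1 + v (u j) :=
    Finsupp.exists_single_add_eq_single_add_of_not_disjoint (hdeg _) (hdeg _) (hadj j).2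
  choose a b hab using hrel
  let c (j : {j // j ≠ r}) : LinearRelation v := ⟨((a j, b j), (j, u j)), hab j⟩
  have := (linearSyzygyMatrix k v).card_le_rank_of_linearIndependent_col c
    (linearIndependent_of_triangular _ Subtype.val (fun j => G.dist j r) (fun j => ?_)
      (fun i j hji hne => ?_))
  · simpa using this
  · simp [c, linearSyzygyMatrix, (hadj j).1, X_ne_zero]
  · have hij : (i : ι) ≠ j := Subtype.val_injective.ne hji.symm
    have hparent : (i : ι) = u j := by
      by_contra h
      simp [c, linearSyzygyMatrix, hij, h] at hne
    exact hparent ▸ hdist j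

end LinearSyzygy

open scoped Classical in
theorem stmt_14_general (n q : ℕ) (k : Type*) [Field k]
    (v : Fin q → (Fin n →₀ ℕ))
    (hdeg : ∀ j, ∑ i, v j i = 2)
    (LS : Matrix (Fin q)
      {t : (Fin n × Fin n) × (Fin q × Fin q) //
        Finsupp.single t.1.1 1 + v t.2.1 = Finsupp.single t.1.2 1 + v t.2.2}
      (MvPolynomial (Fin n) k))
    (hLS : ∀ t j, LS j t =
      (if j = t.1.2.1 then X t.1.1.1 else 0) - (if j = t.1.2.2 then X t.1.1.2 else 0)) :
    LS.rank = q - 1 ↔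
      ¬ ∃ S : Set (Fin q), S.Nonempty ∧ Sᶜ.Nonempty ∧
          ∀ j ∈ S, ∀ l ∈ Sᶜ, Disjoint (v j).support (v l).support := by
  obtain rfl : LS = linearSyzygyMatrix k v := Matrix.ext fun j t => hLS t j
  have hdeg' j : (v j).degree = 2 := (Finsupp.degree_eq_sum _).trans (hdeg j)
  constructor
  · rintro hrank ⟨S, ⟨j, hj⟩, ⟨l, hl : l ∉ S⟩, hS⟩
    have := rank_linearSyzygyMatrix_add_card_le k hdeg' ![S, Sᶜ]
      (Fin.forall_fin_two.mpr ⟨hS, fun j hj l hl => (hS l (not_not.mp hl) j hj).symm⟩) ![j, l]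
      (by simp [Fin.forall_fin_two, hj, hl])
    simp only [Fintype.card_fin] at this hrank
    omega
  · intro hcoh
    refine le_antisymm ?_ ?_
    · simpa using rank_linearSyzygyMatrix_le k hdeg'
    · simpa using card_sub_one_le_rank_linearSyzygyMatrix k hdeg'
        (preconnected_sharedVariableGraph hcoh)

open scoped Classical in
/-- Let `F = {x^{v_1},…,x^{v_q}}` be distinct monomials of degree `2` with no
nontrivial common factor.  Then the linear syzygy matrix `LS(F)` has rank `q - 1`
if and only if `F` is cohesive, i.e. `F` cannot be partitioned into two nonempty
subsets involving disjoint sets of variables. -/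
theorem stmt_14 (n q : ℕ) (k : Type*) [Field k]
    (v : Fin q → (Fin n →₀ ℕ)) (hv : Function.Injective v)
    (hdeg : ∀ j, ∑ i, v j i = 2)
    (hgcd : ∀ i : Fin n, ∃ j, v j i = 0)
    (LS : Matrix (Fin q)
      {t : (Fin n × Fin n) × (Fin q × Fin q) //
        Finsupp.single t.1.1 1 + v t.2.1 = Finsupp.single t.1.2 1 + v t.2.2}
      (MvPolynomial (Fin n) k))
    (hLS : ∀ t j, LS j t =
      (if j = t.1.2.1 then X t.1.1.1 else 0) - (if j = t.1.2.2 then X t.1.1.2 else 0)) :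
    LS.rank = q - 1 ↔
      ¬ ∃ S : Set (Fin q), S.Nonempty ∧ Sᶜ.Nonempty ∧
          ∀ j ∈ S, ∀ l ∈ Sᶜ, Disjoint (v j).support (v l).support :=
  stmt_14_general n q k v hdeg LS hLS
end

section
/- Let G̃ be a connected graph with loops on vertices x_1,...,x_n having exactly n edges and loops, corresponding to a set F of n monomials of degree 2, and let A be its n×n incidence matrix. Then det(A) ≠ 0 if and only if either (a) G̃ has no loops, has a unique cycle, and that cycle has odd length, or (b) G̃ is a tree with exactly one loop. -/
open SimpleGraph Finsupp Matrix

variable {n : ℕ}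

lemma loop_ne_edge {i a b : Fin n} (hab : a ≠ b) :
    (Finsupp.single i 2 : Fin n →₀ ℕ) ≠ Finsupp.single a 1 + Finsupp.single b 1 := by
  intro h
  have h2 := DFunLike.congr_fun h a
  simp only [Finsupp.add_apply, Finsupp.single_apply] at h2
  by_cases hia : i = a <;> simp [hia, hab, Ne.symm hab] at h2

lemma edge_pair_eq {i k a b : Fin n} (hik : i ≠ k)
    (h : (Finsupp.single i 1 + Finsupp.single k 1 : Fin n →₀ ℕ) =
      Finsupp.single a 1 + Finsupp.single b 1) : s(i, k) = s(a, b) := by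
  have hi := DFunLike.congr_fun h i
  simp only [Finsupp.add_apply, Finsupp.single_apply, if_pos rfl, if_neg (Ne.symm hik)] at hi
  by_cases hia : a = i
  · subst hia
    have hk : Finsupp.single k 1 = Finsupp.single b (1:ℕ) := add_left_cancel h
    rcases (Finsupp.single_eq_single_iff _ _ _ _).1 hk with ⟨rfl, _⟩ | ⟨h1, _⟩
    · rfl
    · exact absurd h1 one_ne_zero
  · have hbi : b = i := by
      by_contra hbi
      simp [hia, hbi] at hi
    subst hbi
    rw [add_comm (Finsupp.single a 1)] at h
    have hk : Finsupp.single k 1 = Finsupp.single a (1:ℕ) := add_left_cancel h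
    rcases (Finsupp.single_eq_single_iff _ _ _ _).1 hk with ⟨rfl, _⟩ | ⟨h1, _⟩
    · exact Sym2.eq_swap
    · exact absurd h1 one_ne_zero

lemma pair_eq_edge {i k a b : Fin n} (h : s(i, k) = s(a, b)) :
    (Finsupp.single i 1 + Finsupp.single k 1 : Fin n →₀ ℕ) =
      Finsupp.single a 1 + Finsupp.single b 1 := by
  rcases (Sym2.eq_iff.1 h) with ⟨rfl, rfl⟩ | ⟨rfl, rfl⟩
  · rfl
  · exact add_comm _ _

lemma column_form {v : Fin n → (Fin n →₀ ℕ)} (hdeg : ∀ j, ∑ i, v j i = 2) (j : Fin n) :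
    (∃ i, v j = Finsupp.single i 2) ∨
      ∃ i k, i ≠ k ∧ v j = Finsupp.single i 1 + Finsupp.single k 1 := by
  set s := v j with hs
  have hsum : ∑ i, s i = 2 := hdeg j
  have hpair : ∀ a b : Fin n, a ≠ b → s a + s b ≤ 2 := by
    intro a b hab
    calc s a + s b = ∑ i ∈ ({a, b} : Finset (Fin n)), s i := (Finset.sum_pair hab).symm
    _ ≤ ∑ i, s i := Finset.sum_le_sum_of_subset (Finset.subset_univ _)
    _ = 2 := hsum
  have hle : ∀ a : Fin n, s a ≤ 2 := by
    intro a
    calc s a ≤ ∑ i, s i := Finset.single_le_sum (fun i _ => Nat.zero_le _) (Finset.mem_univ a)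
    _ = 2 := hsum
  by_cases h2 : ∃ i, 2 ≤ s i
  · obtain ⟨i, hi⟩ := h2
    left
    refine ⟨i, ?_⟩
    have hi2 : s i = 2 := le_antisymm (hle i) hi
    ext m
    rw [Finsupp.single_apply]
    by_cases him : i = m
    · subst him; simp [hi2]
    · have := hpair i m him
      rw [if_neg him]
      omega
  · push_neg at h2
    have h1 : ∀ i, s i ≤ 1 := fun i => by have := h2 i; omega
    obtain ⟨i, -, hi⟩ : ∃ i ∈ Finset.univ, s i ≠ 0 :=
      Finset.exists_ne_zero_of_sum_ne_zero (by rw [hsum]; norm_num)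
    have hi1 : s i = 1 := le_antisymm (h1 i) (Nat.one_le_iff_ne_zero.2 hi)
    have hsum' : ∑ m ∈ Finset.univ.erase i, s m = 1 := by
      have h := Finset.add_sum_erase Finset.univ s (Finset.mem_univ i)
      omega
    obtain ⟨k, hk, hk0⟩ : ∃ k ∈ Finset.univ.erase i, s k ≠ 0 :=
      Finset.exists_ne_zero_of_sum_ne_zero (by rw [hsum']; norm_num)
    have hki : k ≠ i := (Finset.mem_erase.1 hk).1
    have hk1 : s k = 1 := le_antisymm (h1 k) (Nat.one_le_iff_ne_zero.2 hk0)
    have hrest : ∑ m ∈ (Finset.univ.erase i).erase k, s m = 0 := by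
      have h := Finset.add_sum_erase (Finset.univ.erase i) s hk
      omega
    right
    refine ⟨i, k, Ne.symm hki, ?_⟩
    ext m
    rw [Finsupp.add_apply, Finsupp.single_apply, Finsupp.single_apply]
    by_cases him : i = m
    · subst him; rw [if_pos rfl, if_neg hki]; omega
    · rw [if_neg him]
      by_cases hkm : k = m
      · subst hkm; rw [if_pos rfl]; omega
      · rw [if_neg hkm]
        have hm : m ∈ (Finset.univ.erase i).erase k :=
          Finset.mem_erase.2 ⟨Ne.symm hkm, Finset.mem_erase.2 ⟨Ne.symm him, Finset.mem_univ m⟩⟩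
        exact (Finset.sum_eq_zero_iff.1 hrest) m hm

lemma walkCombo {v : Fin n → (Fin n →₀ ℕ)} {G : SimpleGraph (Fin n)}
    {B : Matrix (Fin n) (Fin n) ℚ}
    (hv : Function.Injective v)
    (hAdjCol : ∀ {a b : Fin n}, G.Adj a b →
      ∃ j, v j = Finsupp.single a 1 + Finsupp.single b 1)
    (hB : ∀ i j, B i j = ((v j) i : ℚ))
    {a b : Fin n} (p : G.Walk a b) (ht : p.IsTrail) :
    ∃ x : Fin n → ℚ,
      (∀ j, x j = 0 ∨ x j = 1 ∨ x j = -1) ∧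
      (∀ j, x j ≠ 0 → ∃ i k, i ≠ k ∧
        v j = Finsupp.single i 1 + Finsupp.single k 1 ∧ s(i, k) ∈ p.edges) ∧
      (∀ j i k, i ≠ k → v j = Finsupp.single i 1 + Finsupp.single k 1 →
        s(i, k) ∈ p.edges → x j ≠ 0) ∧
      B.mulVec x = fun i =>
        (if a = i then 1 else 0) + (-1) ^ (p.length + 1) * (if b = i then (1:ℚ) else 0) := by
  induction p with
  | nil =>
    refine ⟨0, fun j => Or.inl rfl, fun j hj => absurd rfl hj, ?_, ?_⟩
    · intro j i k _ _ hmem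
      simp [Walk.edges_nil] at hmem
    · funext i
      simp only [Matrix.mulVec_zero, Pi.zero_apply, Walk.length_nil, zero_add, pow_one,
        neg_one_mul]
      split <;> simp
  | @cons a c b h q ih =>
    rw [Walk.isTrail_cons] at ht
    obtain ⟨hqt, hnotin⟩ := ht
    obtain ⟨x, hx01, hxsupp, hxedge, hxmul⟩ := ih hqt
    obtain ⟨je, hje⟩ := hAdjCol h
    have hxje : x je = 0 := by
      by_contra h0
      obtain ⟨i, k, hik, hvj, hmem⟩ := hxsupp je h0
      rw [hje] at hvj
      exact hnotin ((edge_pair_eq hik hvj.symm) ▸ hmem)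
    refine ⟨fun j => (if j = je then (1:ℚ) else 0) - x j, ?_, ?_, ?_, ?_⟩
    · intro j
      show ((if j = je then (1:ℚ) else 0) - x j = 0 ∨ (if j = je then (1:ℚ) else 0) - x j = 1 ∨ (if j = je then (1:ℚ) else 0) - x j = -1)
      by_cases hj : j = je
      · subst hj; rw [if_pos rfl, hxje]; norm_num
      · rw [if_neg hj, zero_sub]
        rcases hx01 j with h0 | h0 | h0 <;> rw [h0] <;> norm_num
    · intro j hj0
      replace hj0 : (if j = je then (1:ℚ) else 0) - x j ≠ 0 := hj0
      by_cases hj : j = je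
      · subst hj
        exact ⟨a, c, h.ne, hje, by simp [Walk.edges_cons]⟩
      · have hxj : x j ≠ 0 := by
          intro h0; apply hj0; rw [if_neg hj, h0, sub_zero]
        obtain ⟨i, k, hik, hvj, hm⟩ := hxsupp j hxj
        exact ⟨i, k, hik, hvj, by simp [Walk.edges_cons, hm]⟩
    · intro j i k hik hvj hmem
      show (if j = je then (1:ℚ) else 0) - x j ≠ 0
      rw [Walk.edges_cons, List.mem_cons] at hmem
      rcases hmem with hmem | hmem
      · have : v j = v je := by rw [hvj, hje]; exact pair_eq_edge hmem
        have hjje : j = je := hv this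
        subst hjje
        rw [if_pos rfl, hxje]; norm_num
      · have hxj : x j ≠ 0 := hxedge j i k hik hvj hmem
        have hj : j ≠ je := by rintro rfl; exact hxj hxje
        rw [if_neg hj, zero_sub]
        exact neg_ne_zero.2 hxj
    · funext i
      have h1 : B.mulVec (fun j => (if j = je then (1:ℚ) else 0) - x j) i
          = B i je - B.mulVec x i := by
        simp [Matrix.mulVec, dotProduct, mul_sub, Finset.sum_sub_distrib,
          mul_ite, mul_one, mul_zero, Finset.sum_ite_eq']
      rw [h1, hB i je, hje, congrFun hxmul i]
      simp only [Finsupp.add_apply, Finsupp.single_apply, Walk.length_cons]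
      push_cast
      rw [pow_succ ((-1:ℚ)) (q.length + 1)]
      by_cases hai : a = i <;> by_cases hci : c = i <;> by_cases hbi : b = i <;>
        simp [hai, hci, hbi] <;> ring

lemma mulVec_comb (B : Matrix (Fin n) (Fin n) ℚ) (f g h : Fin n → ℚ) (a b : ℚ) :
    B.mulVec (fun j => f j + a * g j + b * h j) =
      fun i => B.mulVec f i + a * B.mulVec g i + b * B.mulVec h i := by
  funext i
  simp only [Matrix.mulVec, dotProduct, mul_add, Finset.sum_add_distrib,
    Finset.mul_sum]
  congr 1
  · congr 1
    apply Finset.sum_congr rfl; intro j _; ring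
  · apply Finset.sum_congr rfl; intro j _; ring

lemma mulVec_delta (B : Matrix (Fin n) (Fin n) ℚ) (j0 : Fin n) :
    B.mulVec (fun j => if j = j0 then (1:ℚ) else 0) = fun i => B i j0 := by
  funext i
  simp [Matrix.mulVec, dotProduct, mul_ite, mul_one, mul_zero, Finset.sum_ite_eq']

lemma det_ne_zero_of_delta_mem {v : Fin n → (Fin n →₀ ℕ)} {G : SimpleGraph (Fin n)}
    {B : Matrix (Fin n) (Fin n) ℚ}
    (hv : Function.Injective v)
    (hAdjCol : ∀ {a b : Fin n}, G.Adj a b →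
      ∃ j, v j = Finsupp.single a 1 + Finsupp.single b 1)
    (hB : ∀ i j, B i j = ((v j) i : ℚ))
    (hconn : G.Connected) (u : Fin n)
    (hu : (fun i => if u = i then (1:ℚ) else 0) ∈ LinearMap.range B.mulVecLin) :
    B.det ≠ 0 := by
  have hrange : ∀ w : Fin n,
      (fun i => if w = i then (1:ℚ) else 0) ∈ LinearMap.range B.mulVecLin := by
    intro w
    obtain ⟨p0⟩ := hconn.preconnected u w
    obtain ⟨x, -, -, -, hmul⟩ := walkCombo hv hAdjCol hB p0.toPath.1 p0.toPath.2.isTrail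
    set m := (p0.toPath.1.length + 1) with hm
    have hfm : (fun i => (if u = i then (1:ℚ) else 0) + (-1) ^ m * (if w = i then 1 else 0))
        ∈ LinearMap.range B.mulVecLin := ⟨x, by rw [Matrix.mulVecLin_apply, hmul]⟩
    rcases neg_one_pow_eq_or ℚ m with h1 | h1 <;> rw [h1] at hfm
    · have := Submodule.sub_mem _ hfm hu
      have he : (fun i => if w = i then (1:ℚ) else 0) =
          (fun i => (if u = i then (1:ℚ) else 0) + 1 * (if w = i then 1 else 0)) -
            (fun i => if u = i then (1:ℚ) else 0) := by
        funext i; simp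
      rw [he]; exact this
    · have := Submodule.sub_mem _ hu hfm
      have he : (fun i => if w = i then (1:ℚ) else 0) =
          (fun i => if u = i then (1:ℚ) else 0) -
            (fun i => (if u = i then (1:ℚ) else 0) + (-1) * (if w = i then 1 else 0)) := by
        funext i; simp only [Pi.sub_apply]; split <;> ring
      rw [he]; exact this
  have htop : LinearMap.range B.mulVecLin = ⊤ := by
    rw [eq_top_iff]
    rintro y -
    have hy : y = ∑ w, y w • (fun i => if w = i then (1:ℚ) else 0) := by
      funext i
      simp only [Finset.sum_apply, Pi.smul_apply, smul_eq_mul, mul_ite, mul_one, mul_zero]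
      rw [Finset.sum_ite_eq' Finset.univ i y]
      simp
    rw [hy]
    exact Submodule.sum_mem _ fun w _ => Submodule.smul_mem _ _ (hrange w)
  have hinj : Function.Injective B.mulVecLin :=
    LinearMap.injective_iff_surjective.2 (LinearMap.range_eq_top.1 htop)
  intro hdet
  obtain ⟨xx, hxx0, hxxm⟩ := Matrix.exists_mulVec_eq_zero_iff.2 hdet
  exact hxx0 (hinj (show B.mulVecLin xx = B.mulVecLin 0 by
    rw [map_zero, Matrix.mulVecLin_apply, hxxm]))

section kernels

variable {v : Fin n → (Fin n →₀ ℕ)} {G : SimpleGraph (Fin n)}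
    {B : Matrix (Fin n) (Fin n) ℚ}
    (hv : Function.Injective v)
    (hAdjCol : ∀ {a b : Fin n}, G.Adj a b →
      ∃ j, v j = Finsupp.single a 1 + Finsupp.single b 1)
    (hB : ∀ i j, B i j = ((v j) i : ℚ))

include hv hAdjCol hB

lemma col_loop {j0 i0 : Fin n} (h0 : v j0 = Finsupp.single i0 2) (i : Fin n) :
    B i j0 = 2 * (if i0 = i then 1 else 0) := by
  rw [hB, h0, Finsupp.single_apply]
  split <;> norm_num

lemma det_zero_of_even_cycle {u : Fin n} (c : G.Walk u u) (hc : c.IsCycle)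
    (hev : Even c.length) : B.det = 0 := by
  obtain ⟨x, hx01, hxsupp, hxedge, hxmul⟩ := walkCombo hv hAdjCol hB c hc.isCircuit.isTrail
  rw [← Matrix.exists_mulVec_eq_zero_iff]
  have hxne : x ≠ 0 := by
    cases c with
    | nil => exact absurd rfl hc.ne_nil
    | cons h q =>
      obtain ⟨je, hje⟩ := hAdjCol h
      have : x je ≠ 0 := hxedge je _ _ h.ne hje (by simp [Walk.edges_cons])
      exact fun h0 => this (congrFun h0 je)
  refine ⟨x, hxne, ?_⟩
  rw [hxmul]
  funext i
  have h2 : ((-1:ℚ)) ^ (c.length + 1) = -1 := (Even.add_one hev).neg_one_pow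
  simp only [h2, Pi.zero_apply]
  split <;> ring

lemma det_zero_of_two_loops (hconn : G.Connected) {j1 j2 i1 i2 : Fin n} (hne : j1 ≠ j2)
    (h1 : v j1 = Finsupp.single i1 2) (h2 : v j2 = Finsupp.single i2 2) : B.det = 0 := by
  obtain ⟨p0⟩ := hconn.preconnected i1 i2
  obtain ⟨y, hy01, hysupp, -, hymul⟩ := walkCombo hv hAdjCol hB p0.toPath.1 p0.toPath.2.isTrail
  set ℓ := p0.toPath.1.length with hℓ
  have hyloop : ∀ {j i : Fin n}, v j = Finsupp.single i 2 → y j = 0 := by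
    intro j i hj
    by_contra h0
    obtain ⟨i', k', hik, hvj, -⟩ := hysupp j h0
    exact loop_ne_edge hik (hj ▸ hvj)
  rw [← Matrix.exists_mulVec_eq_zero_iff]
  refine ⟨fun j => (if j = j1 then 1 else 0) + (-1)^(ℓ+1) * (if j = j2 then 1 else 0)
    + (-2) * y j, ?_, ?_⟩
  · intro h0
    have := congrFun h0 j1
    rw [if_pos rfl, if_neg hne, hyloop h1] at this
    simp at this
  · rw [mulVec_comb, mulVec_delta, mulVec_delta]
    funext i
    simp only [hymul, col_loop hv hAdjCol hB h1, col_loop hv hAdjCol hB h2, Pi.zero_apply]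
    by_cases hi1 : i1 = i <;> by_cases hi2 : i2 = i <;> simp [hi1, hi2] <;> ring

lemma det_zero_of_loop_and_cycle (hconn : G.Connected) {j0 i0 : Fin n}
    (h0 : v j0 = Finsupp.single i0 2) {u : Fin n} (c : G.Walk u u) (hc : c.IsCycle) :
    B.det = 0 := by
  rcases Nat.even_or_odd c.length with hev | hodd
  · exact det_zero_of_even_cycle hv hAdjCol hB c hc hev
  obtain ⟨x1, hx01, hxsupp, hxedge, hxmul⟩ := walkCombo hv hAdjCol hB c hc.isCircuit.isTrail
  obtain ⟨p0⟩ := hconn.preconnected i0 u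
  obtain ⟨y, hy01, hysupp, -, hymul⟩ := walkCombo hv hAdjCol hB p0.toPath.1 p0.toPath.2.isTrail
  set ℓ := p0.toPath.1.length with hℓ
  have hcl : ((-1:ℚ)) ^ (c.length + 1) = 1 := (Odd.add_one hodd).neg_one_pow
  have hloopzero : ∀ (z : Fin n → ℚ),
      (∀ j, z j ≠ 0 → ∃ i k, i ≠ k ∧
        v j = Finsupp.single i 1 + Finsupp.single k 1 ∧ True) → True := fun _ _ => trivial
  have hx1j0 : x1 j0 = 0 := by
    by_contra hz
    obtain ⟨i', k', hik, hvj, -⟩ := hxsupp j0 hz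
    exact loop_ne_edge hik (h0 ▸ hvj)
  have hyj0 : y j0 = 0 := by
    by_contra hz
    obtain ⟨i', k', hik, hvj, -⟩ := hysupp j0 hz
    exact loop_ne_edge hik (h0 ▸ hvj)
  rw [← Matrix.exists_mulVec_eq_zero_iff]
  refine ⟨fun j => (if j = j0 then 1 else 0) + (-1)^(ℓ+1) * x1 j + (-2) * y j, ?_, ?_⟩
  · intro hz
    have := congrFun hz j0
    rw [if_pos rfl, hx1j0, hyj0] at this
    simp at this
  · rw [mulVec_comb, mulVec_delta]
    funext i
    simp only [hymul, hxmul, col_loop hv hAdjCol hB h0, Pi.zero_apply, hcl]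
    by_cases hi0 : i0 = i <;> by_cases hu : u = i <;> simp [hi0, hu] <;> ring

lemma det_zero_of_two_cycles (hconn : G.Connected) {u w : Fin n}
    (c : G.Walk u u) (c' : G.Walk w w) (hc : c.IsCycle) (hc' : c'.IsCycle)
    (hodd : Odd c.length) (hodd' : Odd c'.length) {i k : Fin n} (hadj : G.Adj i k)
    (he : s(i, k) ∈ c.edges) (he' : s(i, k) ∉ c'.edges) : B.det = 0 := by
  obtain ⟨x1, hx101, hx1supp, hx1edge, hx1mul⟩ :=
    walkCombo hv hAdjCol hB c hc.isCircuit.isTrail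
  obtain ⟨x2, hx201, hx2supp, hx2edge, hx2mul⟩ :=
    walkCombo hv hAdjCol hB c' hc'.isCircuit.isTrail
  obtain ⟨p0⟩ := hconn.preconnected u w
  obtain ⟨y, hy01, hysupp, -, hymul⟩ := walkCombo hv hAdjCol hB p0.toPath.1 p0.toPath.2.isTrail
  set ℓ := p0.toPath.1.length with hℓ
  obtain ⟨je, hje⟩ := hAdjCol hadj
  have hx1je : x1 je ≠ 0 := hx1edge je i k hadj.ne hje he
  have hx2je : x2 je = 0 := by
    by_contra hz
    obtain ⟨i', k', hik', hvj, hmem⟩ := hx2supp je hz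
    rw [hje] at hvj
    exact he' ((edge_pair_eq hik' hvj.symm) ▸ hmem)
  have hcl : ((-1:ℚ)) ^ (c.length + 1) = 1 := (Odd.add_one hodd).neg_one_pow
  have hcl' : ((-1:ℚ)) ^ (c'.length + 1) = 1 := (Odd.add_one hodd').neg_one_pow
  rw [← Matrix.exists_mulVec_eq_zero_iff]
  refine ⟨fun j => x1 j + (-1)^(ℓ+1) * x2 j + (-2) * y j, ?_, ?_⟩
  · intro hz
    have h0 := congrFun hz je
    rw [hx2je] at h0
    simp only [mul_zero, add_zero] at h0
    rcases hx101 je with h1 | h1 | h1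
    · exact hx1je h1
    · rcases hy01 je with h2 | h2 | h2 <;> rw [h1, h2] at h0 <;> norm_num at h0
    · rcases hy01 je with h2 | h2 | h2 <;> rw [h1, h2] at h0 <;> norm_num at h0
  · rw [mulVec_comb]
    funext i
    simp only [hymul, hx1mul, hx2mul, Pi.zero_apply, hcl, hcl']
    by_cases hu : u = i <;> by_cases hw : w = i <;> simp [hu, hw] <;> ring

end kernels

/-- Let `G̃` be a graph with loops on vertices `x_1,…,x_n` with exactly `n` edges and
loops, given by `n` distinct monomials `x^{v_1},…,x^{v_n}` of degree `2`, whose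
underlying simple graph `G` is connected, and let `A` be the `n × n` incidence
matrix (`A i j = v j i`).  Then `det A ≠ 0` if and only if either
(a) `G̃` has no loops, has a unique cycle, and this cycle has odd length; or
(b) `G̃` is a tree with exactly one loop. -/
theorem stmt_16 (n : ℕ)
    (v : Fin n → (Fin n →₀ ℕ)) (hv : Function.Injective v)
    (hdeg : ∀ j, ∑ i, v j i = 2)
    (G : SimpleGraph (Fin n))
    (hG : G = SimpleGraph.fromRel
      (fun i k' => ∃ j, v j = Finsupp.single i 1 + Finsupp.single k' 1))
    (hconn : G.Connected)
    (A : Matrix (Fin n) (Fin n) ℤ) (hA : ∀ i j, A i j = ((v j) i : ℤ)) :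
    A.det ≠ 0 ↔
      (((¬ ∃ (j i : Fin n), v j = Finsupp.single i 2) ∧
        (∃ (u : Fin n) (c : G.Walk u u), c.IsCycle) ∧
        (∀ (u w : Fin n) (c : G.Walk u u) (c' : G.Walk w w),
          c.IsCycle → c'.IsCycle → c.edges.toFinset = c'.edges.toFinset) ∧
        (∀ (u : Fin n) (c : G.Walk u u), c.IsCycle → Odd c.length)) ∨
      (G.IsTree ∧ ∃! j : Fin n, ∃ i : Fin n, v j = Finsupp.single i 2)) := by
  classical
  set B : Matrix (Fin n) (Fin n) ℚ := A.map (Int.cast) with hBdef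
  have hB : ∀ i j, B i j = ((v j) i : ℚ) := by
    intro i j
    rw [hBdef, Matrix.map_apply, hA]
    push_cast
    rfl
  have hdetBA : B.det = ((A.det : ℤ) : ℚ) := by
    have hmm : (A.map (Int.cast : ℤ → ℚ)) = (Int.castRingHom ℚ).mapMatrix A := rfl
    rw [hBdef, hmm, ← RingHom.map_det]
    rfl
  have hdet_iff : A.det ≠ 0 ↔ B.det ≠ 0 := by
    rw [hdetBA]
    exact (Int.cast_ne_zero (α := ℚ)).symm
  have hAdjCol : ∀ {a b : Fin n}, G.Adj a b →
      ∃ j, v j = Finsupp.single a 1 + Finsupp.single b 1 := by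
    intro a b hab
    rw [hG, fromRel_adj] at hab
    rcases hab.2 with ⟨j, hj⟩ | ⟨j, hj⟩
    · exact ⟨j, hj⟩
    · exact ⟨j, by rw [hj]; exact add_comm _ _⟩
  have hColAdj : ∀ {j a b : Fin n}, a ≠ b →
      v j = Finsupp.single a 1 + Finsupp.single b 1 → G.Adj a b := by
    intro j a b hab hj
    rw [hG, fromRel_adj]
    exact ⟨hab, Or.inl ⟨j, hj⟩⟩
  constructor
  · intro hdet
    by_cases hloop : ∃ j i, v j = Finsupp.single i 2
    · right
      obtain ⟨j0, i0, h0⟩ := hloop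
      have hacyc : G.IsAcyclic := fun u c hc =>
        (hdet_iff.1 hdet) (det_zero_of_loop_and_cycle hv hAdjCol hB hconn h0 c hc)
      refine ⟨⟨hconn, hacyc⟩, j0, ⟨i0, h0⟩, ?_⟩
      rintro j' ⟨i', h'⟩
      by_contra hne
      exact (hdet_iff.1 hdet) (det_zero_of_two_loops hv hAdjCol hB hconn hne h' h0)
    · left
      have hodd : ∀ (u : Fin n) (c : G.Walk u u), c.IsCycle → Odd c.length := by
        intro u c hc
        rcases Nat.even_or_odd c.length with hev | h
        · exact absurd (det_zero_of_even_cycle hv hAdjCol hB c hc hev) (hdet_iff.1 hdet)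
        · exact h
      have key : ∀ {u w : Fin n} (c : G.Walk u u) (c' : G.Walk w w), c.IsCycle → c'.IsCycle →
          ∀ e, e ∈ c.edges → e ∉ c'.edges → False := by
        intro u w c c' hc hc' e
        induction e using Sym2.ind with
        | _ i k =>
          intro he he'
          have hadj : G.Adj i k := c.adj_of_mem_edges he
          exact (hdet_iff.1 hdet) (det_zero_of_two_cycles hv hAdjCol hB hconn c c' hc hc'
            (hodd _ c hc) (hodd _ c' hc') hadj he he')
      refine ⟨hloop, ?_, ?_, hodd⟩
      · by_contra hnocyc
        push_neg at hnocyc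
        have hacyc : G.IsAcyclic := fun u c hc => hnocyc u c hc
        have htree : G.IsTree := ⟨hconn, hacyc⟩
        have hcard := htree.card_edgeFinset
        have hform : ∀ j, ∃ i k, i ≠ k ∧
            v j = Finsupp.single i 1 + Finsupp.single k 1 := by
          intro j
          rcases column_form hdeg j with ⟨i, hi⟩ | h
          · exact absurd ⟨j, i, hi⟩ hloop
          · exact h
        choose f g hfg hvfg using hform
        have hmem : ∀ j, s(f j, g j) ∈ G.edgeFinset := by
          intro j
          rw [SimpleGraph.mem_edgeFinset, SimpleGraph.mem_edgeSet]
          exact hColAdj (hfg j) (hvfg j)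
        have hinj : Function.Injective
            (fun j => (⟨s(f j, g j), hmem j⟩ : {x // x ∈ G.edgeFinset})) := by
          intro j j' hjj
          apply hv
          rw [hvfg j, hvfg j']
          exact pair_eq_edge (Subtype.mk_eq_mk.1 hjj)
        have hle := Fintype.card_le_of_injective _ hinj
        rw [Fintype.card_fin, Fintype.card_coe] at hle
        rw [Fintype.card_fin] at hcard
        omega
      · intro u w c c' hc hc'
        by_contra hne
        have hcases : ¬(c.edges.toFinset ⊆ c'.edges.toFinset) ∨
            ¬(c'.edges.toFinset ⊆ c.edges.toFinset) := by
          by_contra hb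
          push_neg at hb
          exact hne (Finset.Subset.antisymm hb.1 hb.2)
        rcases hcases with hsub | hsub
        · obtain ⟨e, he, he'⟩ := Finset.not_subset.1 hsub
          rw [List.mem_toFinset] at he he'
          exact key c c' hc hc' e he he'
        · obtain ⟨e, he, he'⟩ := Finset.not_subset.1 hsub
          rw [List.mem_toFinset] at he he'
          exact key c' c hc' hc e he he'
  · rintro (⟨hnoloop, ⟨u, c, hc⟩, huniq, hodd⟩ | ⟨htree, j0, ⟨i0, h0⟩, -⟩)
    · apply hdet_iff.2
      apply det_ne_zero_of_delta_mem hv hAdjCol hB hconn u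
      obtain ⟨x, -, -, -, hxmul⟩ := walkCombo hv hAdjCol hB c hc.isCircuit.isTrail
      have h1 : ((-1:ℚ))^(c.length+1) = 1 := (Odd.add_one (hodd u c hc)).neg_one_pow
      have hmem : (fun i => (2:ℚ) * (if u = i then 1 else 0))
          ∈ LinearMap.range B.mulVecLin := by
        refine ⟨x, ?_⟩
        rw [Matrix.mulVecLin_apply, hxmul]
        funext i
        simp only [h1]
        split <;> ring
      have heq : (fun i => if u = i then (1:ℚ) else 0) =
          (2:ℚ)⁻¹ • (fun i => (2:ℚ) * (if u = i then 1 else 0)) := by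
        funext i
        simp only [Pi.smul_apply, smul_eq_mul]
        split <;> norm_num
      rw [heq]
      exact Submodule.smul_mem _ _ hmem
    · apply hdet_iff.2
      apply det_ne_zero_of_delta_mem hv hAdjCol hB hconn i0
      have hmem : (fun i => (2:ℚ) * (if i0 = i then 1 else 0))
          ∈ LinearMap.range B.mulVecLin := by
        refine ⟨fun j => if j = j0 then 1 else 0, ?_⟩
        rw [Matrix.mulVecLin_apply, mulVec_delta]
        funext i
        rw [col_loop hv hAdjCol hB h0]
      have heq : (fun i => if i0 = i then (1:ℚ) else 0) =
          (2:ℚ)⁻¹ • (fun i => (2:ℚ) * (if i0 = i then 1 else 0)) := by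
        funext i
        simp only [Pi.smul_apply, smul_eq_mul]
        split <;> norm_num
      rw [heq]
      exact Submodule.smul_mem _ _ hmem
end

section
/- Let A be an n×n doubly stochastic 0-1 matrix with all row sums and column sums equal to d (1 ≤ d < n). If |det(A)| = d, then gcd(n, d) = 1. -/
/-- Let `A` be an `n × n` doubly stochastic `0-1` matrix all of whose row and column
sums equal `d`, with `1 ≤ d < n`.  If `|det A| = d`, then `gcd(n, d) = 1`. -/
theorem stmt_19 (n d : ℕ) (hd1 : 1 ≤ d) (hdn : d < n)
    (A : Matrix (Fin n) (Fin n) ℤ)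
    (h01 : ∀ i j, A i j = 0 ∨ A i j = 1)
    (hrow : ∀ i, ∑ j, A i j = (d : ℤ))
    (hcol : ∀ j, ∑ i, A i j = (d : ℤ))
    (hdet : A.det.natAbs = d) :
    Nat.gcd n d = 1 := by
  by_contra hg
  obtain ⟨p, hp, hpg⟩ := Nat.exists_prime_and_dvd hg
  have hpn : p ∣ n := hpg.trans (Nat.gcd_dvd_left n d)
  have hpd : p ∣ d := hpg.trans (Nat.gcd_dvd_right n d)
  haveI : Fact p.Prime := ⟨hp⟩
  have hdz : (d : ℤ) ≠ 0 := by exact_mod_cast Nat.one_le_iff_ne_zero.mp hd1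
  -- the determinant is `ε * d` with `ε = ±1`
  obtain ⟨ε, hεpm, hε⟩ : ∃ ε : ℤ, (ε = 1 ∨ ε = -1) ∧ A.det = ε * (d : ℤ) := by
    rcases Int.natAbs_eq_iff.mp hdet with h | h
    · exact ⟨1, Or.inl rfl, by rw [h, one_mul]⟩
    · exact ⟨-1, Or.inr rfl, by rw [h]; ring⟩
  -- row sums of the adjugate are all `ε`
  have key : ∀ i, (d : ℤ) * ∑ j, A.adjugate i j = A.det := by
    intro i
    have h1 : ∑ k, (A.adjugate * A) i k = A.det := by
      rw [Matrix.adjugate_mul]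
      simp [Matrix.smul_apply, Matrix.one_apply]
    rw [← h1]
    simp only [Matrix.mul_apply]
    rw [Finset.sum_comm, Finset.mul_sum]
    refine Finset.sum_congr rfl fun j _ => ?_
    rw [← Finset.mul_sum, hrow j, mul_comm]
  have hsum : ∀ i, ∑ j, A.adjugate i j = ε := by
    intro i
    have : (d : ℤ) * ∑ j, A.adjugate i j = (d : ℤ) * ε := by
      rw [key i, hε, mul_comm]
    exact mul_left_cancel₀ hdz this
  -- move to `ZMod p`
  set f : ℤ →+* ZMod p := Int.castRingHom (ZMod p) with hf
  set A' : Matrix (Fin n) (Fin n) (ZMod p) := f.mapMatrix A with hA'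
  set B : Matrix (Fin n) (Fin n) (ZMod p) := f.mapMatrix A.adjugate with hB
  have hBadj : B = A'.adjugate := f.map_adjugate A
  have hd0 : ((d : ℕ) : ZMod p) = 0 := (ZMod.natCast_eq_zero_iff d p).mpr hpd
  have hn0 : ((n : ℕ) : ZMod p) = 0 := (ZMod.natCast_eq_zero_iff n p).mpr hpn
  have hε0 : f ε ≠ 0 := by
    rcases hεpm with h | h <;> simp [h, hf]
  have hBsum : ∀ i, ∑ j, B i j = f ε := by
    intro i
    have : ∑ j, B i j = f (∑ j, A.adjugate i j) := by
      rw [map_sum]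
      rfl
    rw [this, hsum i]
  have hA'det : A'.det = 0 := by
    rw [hA', ← RingHom.map_det, hε]
    simp [hf, hd0]
  have hBA : B * A' = 0 := by
    rw [hBadj, Matrix.adjugate_mul, hA'det, zero_smul]
  have hA'col : ∀ j, ∑ i, A' i j = 0 := by
    intro j
    have : ∑ i, A' i j = f (∑ i, A i j) := by
      rw [map_sum]
      rfl
    rw [this, hcol j]
    simp [hf, hd0]
  by_cases hc : ∀ i j k, B i j = B i k
  · -- all rows of B constant: row sum is n • c = 0 ≠ ε
    have hn1 : 0 < n := by omega
    let i0 : Fin n := ⟨0, hn1⟩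
    have : ∑ j, B i0 j = (n : ZMod p) * B i0 i0 := by
      rw [Finset.sum_congr rfl fun j _ => hc i0 j i0]
      simp [mul_comm]
    rw [hBsum i0, hn0, zero_mul] at this
    exact hε0 this
  · push_neg at hc
    obtain ⟨i, j, k, hjk⟩ := hc
    -- row i of B is a nonconstant left-kernel vector of A'
    have hw : ∀ j', ∑ s, B i s * A' s j' = 0 := by
      intro j'
      have := congrFun (congrFun hBA i) j'
      simpa [Matrix.mul_apply] using this
    have hB0 : B = 0 := by
      rw [hBadj]
      ext i' j'
      rw [Matrix.adjugate_apply, Matrix.zero_apply]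
      set u : Fin n → ZMod p := fun s => B i s - B i j' with hu
      have hukernel : ∀ j'', ∑ s, u s * A' s j'' = 0 := by
        intro j''
        have : ∑ s, u s * A' s j'' =
            (∑ s, B i s * A' s j'') - B i j' * ∑ s, A' s j'' := by
          rw [Finset.mul_sum, ← Finset.sum_sub_distrib]
          refine Finset.sum_congr rfl fun s _ => by rw [hu]; ring
        rw [this, hw j'', hA'col j'', mul_zero, sub_zero]
      have hu0 : u ≠ 0 := by
        intro h0
        have h1 : u j = 0 := congrFun h0 j
        have h2 : u k = 0 := congrFun h0 k
        rw [hu] at h1 h2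
        simp only [sub_eq_zero] at h1 h2
        exact hjk (h1.trans h2.symm)
      refine Matrix.exists_vecMul_eq_zero_iff.mp ⟨u, hu0, ?_⟩
      funext j''
      have huj' : u j' = 0 := by rw [hu]; simp
      simp only [Matrix.vecMul, dotProduct]
      rw [Pi.zero_apply, ← hukernel j'']
      refine Finset.sum_congr rfl fun s _ => ?_
      by_cases hs : s = j'
      · subst hs
        rw [huj', zero_mul, zero_mul]
      · rw [Matrix.updateRow_ne hs]
    have := hBsum i
    rw [hB0] at this
    simp at this
    exact hε0 this.symm
end
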